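/- arXiv:1607.02552 — 6 statements merged into one kernel-verified Lean document; each statement's English description precedes it below -/
import Mathlib

section
/- Let Q ≥ 1 be an integer and 𝒮 = {0, 1, …, Q}. Let β : 𝒮 → ℕ satisfy β(s) ≤ s for all s ∈ 𝒮 and β(s) ≥ 1 for all s ≥ 1. Let p be a probability mass function on ℕ with p(k) > 0 for every integer 0 ≤ k ≤ Q. Define the transition matrix P on 𝒮 by P(s, s') = Σ_{k ≥ 0 : min(s − β(s) + k, Q) = s'} p(k). Then P is row-stochastic and there exists an integer n ≥ 1 such that (Pⁿ)(s, s') > 0 for all s, s' ∈ 𝒮; that is, the Markov chain describing the battery state of the energy-harvesting transmitter under the stationary policy β is irreducible and aperiodic. -/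
/-- The battery-state Markov chain of an energy-harvesting transmitter under a
stationary policy `β` is row-stochastic, irreducible and aperiodic: some power of
the transition matrix has all entries strictly positive. -/
theorem battery_chain_ergodic (Q : ℕ) (hQ : 1 ≤ Q)
    (β : Fin (Q + 1) → ℕ)
    (hβle : ∀ s : Fin (Q + 1), β s ≤ (s : ℕ))
    (hβpos : ∀ s : Fin (Q + 1), 1 ≤ (s : ℕ) → 1 ≤ β s)
    (p : ℕ → ℝ) (hp0 : ∀ k, 0 ≤ p k) (hpsum : HasSum p 1)
    (hppos : ∀ k : ℕ, k ≤ Q → 0 < p k)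
    (P : Matrix (Fin (Q + 1)) (Fin (Q + 1)) ℝ)
    (hP : ∀ s s' : Fin (Q + 1),
      P s s' = ∑' k : ℕ, if min ((s : ℕ) - β s + k) Q = (s' : ℕ) then p k else 0) :
    (∀ s s', 0 ≤ P s s') ∧ (∀ s, ∑ s', P s s' = 1) ∧
      ∃ n : ℕ, 1 ≤ n ∧ ∀ s s', 0 < (P ^ n) s s' := by
  have hPsum : ∀ (s s' : Fin (Q+1)),
      Summable (fun k => if min ((s:ℕ) - β s + k) Q = (s':ℕ) then p k else 0) := by
    intro s s'
    apply Summable.of_nonneg_of_le _ _ hpsum.summable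
    · intro k; split
      · exact hp0 k
      · exact le_refl 0
    · intro k; split
      · exact le_refl _
      · exact hp0 k
  have hnonneg : ∀ s s', 0 ≤ P s s' := by
    intro s s'
    rw [hP]
    apply tsum_nonneg
    intro k; split
    · exact hp0 k
    · exact le_refl 0
  have hpos : ∀ s s' : Fin (Q+1), (s:ℕ) - β s ≤ (s':ℕ) → 0 < P s s' := by
    intro s s' hle
    rw [hP]
    have hs' := s'.isLt
    have hk : min ((s:ℕ) - β s + ((s':ℕ) - ((s:ℕ) - β s))) Q = (s':ℕ) := by omega
    refine Summable.tsum_pos (hPsum s s') (fun k => ?_) ((s':ℕ) - ((s:ℕ) - β s)) ?_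
    · split
      · exact hp0 k
      · exact le_refl 0
    · rw [if_pos hk]
      exact hppos _ (by omega)
  have hrow : ∀ s, ∑ s', P s s' = 1 := by
    intro s
    have h1 : ∑ s', P s s' = ∑' k : ℕ, ∑ s' : Fin (Q+1),
        (if min ((s:ℕ) - β s + k) Q = (s':ℕ) then p k else 0) := by
      simp_rw [hP]
      exact (Summable.tsum_finsetSum (fun s' _ => hPsum s s')).symm
    rw [h1]
    have heq : ∀ k : ℕ, (∑ s' : Fin (Q+1),
        (if min ((s:ℕ) - β s + k) Q = (s':ℕ) then p k else 0)) = p k := by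
      intro k
      have hlt : min ((s:ℕ) - β s + k) Q < Q + 1 := by omega
      rw [Finset.sum_eq_single (⟨min ((s:ℕ) - β s + k) Q, hlt⟩ : Fin (Q+1))]
      · simp
      · intro b _ hb
        rw [if_neg]
        intro h
        exact hb (Fin.ext h.symm)
      · intro h; exact absurd (Finset.mem_univ _) h
    simp_rw [heq]
    exact hpsum.tsum_eq
  have hpowE : ∀ m, ∀ s s' : Fin (Q+1), 0 ≤ (P ^ m) s s' := by
    intro m
    induction m with
    | zero =>
      intro s s'
      rw [pow_zero, Matrix.one_apply]
      split <;> norm_num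
    | succ m ih =>
      intro s s'
      rw [pow_succ, Matrix.mul_apply]
      exact Finset.sum_nonneg fun t _ => mul_nonneg (ih s t) (hnonneg t s')
  have hzero : ∀ m, ∀ s : Fin (Q+1), (s:ℕ) ≤ m → 0 < (P ^ m) s 0 := by
    intro m
    induction m with
    | zero =>
      intro s hs
      have hs0 : s = 0 := by
        ext
        simpa using hs
      rw [hs0, pow_zero, Matrix.one_apply_eq]
      norm_num
    | succ m ih =>
      intro s hs
      rw [pow_succ', Matrix.mul_apply]
      set t₀ : Fin (Q+1) := ⟨(s:ℕ) - 1, by omega⟩ with ht₀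
      have hle1 : (s:ℕ) - β s ≤ (t₀:ℕ) := by
        rcases Nat.eq_zero_or_pos (s:ℕ) with h | h
        · simp [ht₀]; omega
        · have := hβpos s h
          simp [ht₀]
          omega
      have h1 : 0 < P s t₀ := hpos s t₀ hle1
      apply Finset.sum_pos'
      · intro t _
        exact mul_nonneg (hnonneg s t) (hpowE m t 0)
      · exact ⟨t₀, Finset.mem_univ _, mul_pos h1 (ih t₀ (by simp [ht₀]; omega))⟩
  refine ⟨hnonneg, hrow, Q + 1, by omega, fun s s' => ?_⟩
  rw [pow_succ, Matrix.mul_apply]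
  apply Finset.sum_pos'
  · intro t _
    exact mul_nonneg (hpowE Q s t) (hnonneg t s')
  · refine ⟨0, Finset.mem_univ _, mul_pos (hzero Q s (by have := s.isLt; omega)) (hpos 0 s' ?_)⟩
    simp
end

section
/- For every integer t ≥ 1, ℙ(F_t) ≤ (1 + A) · S · exp(−Δ₁² t / (2 B₀²)). That is, the probability that at time t some non-optimal policy has empirical average reward at least that of the optimal policy is at most (1 + A) S e^{−Δ₁² t/(2B₀²)}. -/
open MeasureTheory ProbabilityTheory Real

section HoeffdingAux

lemma lpsm_hoeffding_scalar (p : ℝ) (hp0 : 0 ≤ p) (hp1 : p ≤ 1) (h : ℝ) :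
    (1 - p) * exp (-p * h) + p * exp ((1 - p) * h) ≤ exp (h ^ 2 / 8) := by
  set den : ℝ → ℝ := fun x => 1 - p + p * exp x with hden_def
  have hden : ∀ x, 0 < den x := by
    intro x
    rcases eq_or_lt_of_le hp0 with h0 | h0
    · simp [hden_def, ← h0]
    · have : 0 < p * exp x := mul_pos h0 (exp_pos x)
      have : 0 ≤ 1 - p := by linarith
      simp only [hden_def]; nlinarith
  set φ : ℝ → ℝ := fun x => -p * x + log (den x) with hφ_def
  set g : ℝ → ℝ := fun x => -p + p * exp x / den x with hg_def
  have hden' : ∀ x, HasDerivAt den (p * exp x) x := fun x =>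
    ((hasDerivAt_exp x).const_mul p).const_add (1 - p)
  have hφ' : ∀ x, HasDerivAt φ (g x) x := by
    intro x
    have h1 : HasDerivAt (fun x : ℝ => -p * x) (-p) x := by
      simpa using (hasDerivAt_id x).const_mul (-p)
    exact h1.add ((hden' x).log (hden x).ne')
  have hg' : ∀ x, HasDerivAt g (p * exp x * (1 - p) / den x ^ 2) x := by
    intro x
    have h1 : HasDerivAt (fun x => p * exp x) (p * exp x) x := (hasDerivAt_exp x).const_mul p
    have h2 := (h1.div (hden' x) (hden x).ne').const_add (-p)
    refine h2.congr_deriv ?_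
    have := (hden x).ne'
    simp only [hden_def]
    ring
  set ψ : ℝ → ℝ := fun x => x ^ 2 / 8 - φ x with hψ_def
  set ψ' : ℝ → ℝ := fun x => x / 4 - g x with hψ'_def
  have hψd : ∀ x, HasDerivAt ψ (ψ' x) x := by
    intro x
    have h1 : HasDerivAt (fun x : ℝ => x ^ 2 / 8) (x / 4) x := by
      have := (hasDerivAt_pow 2 x).div_const 8
      refine this.congr_deriv ?_; norm_num; ring
    exact h1.sub (hφ' x)
  have hψ'd : ∀ x, HasDerivAt ψ' (1 / 4 - p * exp x * (1 - p) / den x ^ 2) x := by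
    intro x
    have h1 : HasDerivAt (fun x : ℝ => x / 4) (1 / 4) x := (hasDerivAt_id x).div_const 4
    exact h1.sub (hg' x)
  have hsec : ∀ x, 0 ≤ 1 / 4 - p * exp x * (1 - p) / den x ^ 2 := by
    intro x
    rw [sub_nonneg, div_le_iff₀ (pow_pos (hden x) 2)]
    have := sq_nonneg ((1 - p) - p * exp x)
    have he := exp_pos x
    simp only [hden_def]
    nlinarith
  have hψ'mono : Monotone ψ' :=
    monotone_of_hasDerivAt_nonneg hψ'd (fun x => hsec x)
  have hψ'0 : ψ' 0 = 0 := by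
    simp [hψ'_def, hg_def, hden_def, exp_zero]
  have hψ0 : ψ 0 = 0 := by
    simp [hψ_def, hφ_def, hden_def, exp_zero]
  have key : 0 ≤ ψ h := by
    rcases le_or_gt 0 h with hh | hh
    · have hmono : MonotoneOn ψ (Set.Ici 0) := by
        apply monotoneOn_of_hasDerivWithinAt_nonneg (convex_Ici 0)
          (fun x _ => (hψd x).continuousAt.continuousWithinAt)
          (fun x hx => (hψd x).hasDerivWithinAt)
        intro x hx
        rw [interior_Ici] at hx
        have : ψ' 0 ≤ ψ' x := hψ'mono (le_of_lt hx)
        rw [hψ'0] at this; exact this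
      have := hmono (Set.self_mem_Ici) (Set.mem_Ici.2 hh) hh
      rwa [hψ0] at this
    · have hmono : AntitoneOn ψ (Set.Iic 0) := by
        apply antitoneOn_of_hasDerivWithinAt_nonpos (convex_Iic 0)
          (fun x _ => (hψd x).continuousAt.continuousWithinAt)
          (fun x hx => (hψd x).hasDerivWithinAt)
        intro x hx
        rw [interior_Iic] at hx
        have : ψ' x ≤ ψ' 0 := hψ'mono (le_of_lt hx)
        rw [hψ'0] at this; exact this
      have := hmono (Set.mem_Iic.2 hh.le) (Set.self_mem_Iic) hh.le
      rwa [hψ0] at this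
  have hφle : φ h ≤ h ^ 2 / 8 := by
    have := key; simp only [hψ_def] at this; linarith
  calc (1 - p) * exp (-p * h) + p * exp ((1 - p) * h)
      = exp (φ h) := by
        rw [hφ_def]
        simp only [exp_add, exp_log (hden h)]
        simp only [hden_def]
        have e1 : exp ((1 - p) * h) = exp h * exp (-p * h) := by
          rw [← exp_add]; ring_nf
        rw [e1]; ring
    _ ≤ exp (h ^ 2 / 8) := exp_le_exp.2 hφle


lemma lpsm_integrable_of_bdd {Ω : Type*} [MeasurableSpace Ω] {Pr : Measure Ω}
    [IsProbabilityMeasure Pr]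
    {Y : Ω → ℝ} (hY : Measurable Y) {C : ℝ} (hC : ∀ ω, |Y ω| ≤ C) : Integrable Y Pr :=
  Integrable.mono' (integrable_const C) hY.aestronglyMeasurable (ae_of_all _ hC)

lemma lpsm_hoeffding_mgf {Ω : Type*} [MeasurableSpace Ω] (Pr : Measure Ω)
    [IsProbabilityMeasure Pr]
    (Y : Ω → ℝ) (hY : Measurable Y) (a b : ℝ)
    (hab : ∀ ω, Y ω ∈ Set.Icc a b) (hmean : ∫ ω, Y ω ∂Pr = 0) (lam : ℝ) :
    mgf Y Pr lam ≤ exp (lam ^ 2 * (b - a) ^ 2 / 8) := by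
  have hΩ : Nonempty Ω := by
    by_contra hc
    have h1 : (Pr Set.univ) = 1 := measure_univ
    have h2 : (Set.univ : Set Ω) = ∅ := by
      ext ω; exact absurd ⟨ω⟩ hc
    rw [h2, measure_empty] at h1
    exact zero_ne_one h1
  obtain ⟨ω₀⟩ := hΩ
  have hYI : Integrable Y Pr := by
    refine lpsm_integrable_of_bdd hY (C := |a| + |b|) fun ω => ?_
    obtain ⟨h1, h2⟩ := hab ω
    rw [abs_le]
    constructor
    · calc -(|a| + |b|) ≤ -|a| := by simp [abs_nonneg]
        _ ≤ a := neg_abs_le a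
        _ ≤ Y ω := h1
    · calc Y ω ≤ b := h2
        _ ≤ |b| := le_abs_self b
        _ ≤ |a| + |b| := by simp [abs_nonneg]
  have ha0 : a ≤ 0 := by
    have : ∫ _ω, a ∂Pr ≤ ∫ ω, Y ω ∂Pr :=
      integral_mono (integrable_const a) hYI fun ω => (hab ω).1
    simpa [hmean] using this
  have hb0 : 0 ≤ b := by
    have : ∫ ω, Y ω ∂Pr ≤ ∫ _ω, b ∂Pr :=
      integral_mono hYI (integrable_const b) fun ω => (hab ω).2
    simpa [hmean] using this
  have hableq : a ≤ b := le_trans (hab ω₀).1 (hab ω₀).2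
  rcases eq_or_lt_of_le hableq with heq | hlt
  · -- a = b, hence a = 0 = b and Y ≡ 0
    have ha : a = 0 := le_antisymm ha0 (by rw [heq]; exact hb0)
    have hb : b = 0 := by rw [← heq, ha]
    have hY0 : ∀ ω, Y ω = 0 := fun ω =>
      le_antisymm (hb ▸ (hab ω).2) (ha ▸ (hab ω).1)
    have hm : mgf Y Pr lam = 1 := by
      simp [mgf, hY0]
    rw [hm, ha, hb]
    norm_num
  · set p : ℝ := -a / (b - a) with hp_def
    have hba : 0 < b - a := sub_pos.2 hlt
    have hp0 : 0 ≤ p := div_nonneg (neg_nonneg.2 ha0) hba.le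
    have hp1 : p ≤ 1 := by
      rw [div_le_one hba]; linarith
    have hpt : ∀ ω, exp (lam * Y ω) ≤
        (b - Y ω) / (b - a) * exp (lam * a) + (Y ω - a) / (b - a) * exp (lam * b) := by
      intro ω
      obtain ⟨h1, h2⟩ := hab ω
      have hu : (0:ℝ) ≤ (b - Y ω) / (b - a) := div_nonneg (by linarith) hba.le
      have hv : (0:ℝ) ≤ (Y ω - a) / (b - a) := div_nonneg (by linarith) hba.le
      have huv : (b - Y ω) / (b - a) + (Y ω - a) / (b - a) = 1 := by
        field_simp
        ring
      have hcomb : (b - Y ω) / (b - a) * (lam * a) + (Y ω - a) / (b - a) * (lam * b)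
          = lam * Y ω := by
        field_simp
        ring
      have := convexOn_exp.2 (Set.mem_univ (lam * a)) (Set.mem_univ (lam * b)) hu hv huv
      simp only [smul_eq_mul] at this
      rw [hcomb] at this
      exact this
    have hIntL : Integrable (fun ω => exp (lam * Y ω)) Pr := by
      refine lpsm_integrable_of_bdd ((hY.const_mul lam).exp) (C := exp (|lam| * (|a| + |b|))) fun ω => ?_
      rw [abs_of_pos (exp_pos _), exp_le_exp]
      calc lam * Y ω ≤ |lam * Y ω| := le_abs_self _
        _ = |lam| * |Y ω| := abs_mul _ _
        _ ≤ |lam| * (|a| + |b|) := by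
            refine mul_le_mul_of_nonneg_left ?_ (abs_nonneg lam)
            obtain ⟨h1, h2⟩ := hab ω
            rw [abs_le]
            constructor <;> [skip; skip] <;>
              first
                | (calc -(|a| + |b|) ≤ -|a| := by simp [abs_nonneg]
                    _ ≤ a := neg_abs_le a
                    _ ≤ Y ω := h1)
                | (calc Y ω ≤ b := h2
                    _ ≤ |b| := le_abs_self b
                    _ ≤ |a| + |b| := by simp [abs_nonneg])
    have hIntR : Integrable
        (fun ω => (b - Y ω) / (b - a) * exp (lam * a) + (Y ω - a) / (b - a) * exp (lam * b)) Pr := by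
      apply Integrable.add
      · exact ((((integrable_const b).sub hYI).div_const (b - a)).mul_const _)
      · exact (((hYI.sub (integrable_const a)).div_const (b - a)).mul_const _)
    have hmgf : mgf Y Pr lam ≤ (1 - p) * exp (lam * a) + p * exp (lam * b) := by
      have h1 : mgf Y Pr lam ≤ ∫ ω, ((b - Y ω) / (b - a) * exp (lam * a)
          + (Y ω - a) / (b - a) * exp (lam * b)) ∂Pr :=
        integral_mono hIntL hIntR hpt
      have hrw : (fun ω => (b - Y ω) / (b - a) * exp (lam * a)
          + (Y ω - a) / (b - a) * exp (lam * b))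
          = fun ω => (b * exp (lam * a) - a * exp (lam * b)) / (b - a)
            + (exp (lam * b) - exp (lam * a)) / (b - a) * Y ω := by
        funext ω
        field_simp
        ring
      have h2 : ∫ ω, ((b - Y ω) / (b - a) * exp (lam * a)
          + (Y ω - a) / (b - a) * exp (lam * b)) ∂Pr
          = (1 - p) * exp (lam * a) + p * exp (lam * b) := by
        rw [hrw, integral_add (integrable_const _) (hYI.const_mul _),
          MeasureTheory.integral_const_mul, hmean, integral_const]
        simp only [probReal_univ, ENNReal.toReal_one, smul_eq_mul, one_mul, mul_zero, add_zero]
        rw [hp_def]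
        field_simp
        ring
      exact h1.trans_eq h2
    refine hmgf.trans ?_
    have key := lpsm_hoeffding_scalar p hp0 hp1 (lam * (b - a))
    have e1 : -p * (lam * (b - a)) = lam * a := by
      rw [hp_def]; field_simp
    have e2 : (1 - p) * (lam * (b - a)) = lam * b := by
      rw [hp_def]; field_simp; ring
    have e3 : (lam * (b - a)) ^ 2 / 8 = lam ^ 2 * (b - a) ^ 2 / 8 := by ring
    rw [e1, e2, e3] at key
    exact key


lemma lpsm_hoeffding_tail {Ω : Type*} [MeasurableSpace Ω] (Pr : Measure Ω)
    [IsProbabilityMeasure Pr]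
    (Z : ℕ → Ω → ℝ) (hZ : ∀ k, Measurable (Z k))
    (hindep : iIndepFun Z Pr)
    (t : ℕ) (B : ℝ) (hB : 0 < B) (a : ℕ → ℝ)
    (hab : ∀ k ∈ Finset.Icc 1 t, ∀ ω, Z k ω ∈ Set.Icc (a k) (a k + B))
    (hmean : ∀ k ∈ Finset.Icc 1 t, ∫ ω, Z k ω ∂Pr = 0)
    (ε : ℝ) (hε : 0 < ε) :
    (Pr {ω | (t : ℝ) * ε ≤ ∑ k ∈ Finset.Icc 1 t, Z k ω}).toReal
      ≤ exp (-2 * t * ε ^ 2 / B ^ 2) := by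
  set lam : ℝ := 4 * ε / B ^ 2 with hlam_def
  have hlam : 0 ≤ lam := by positivity
  have h_int : ∀ k ∈ Finset.Icc 1 t, Integrable (fun ω => exp (lam * Z k ω)) Pr := by
    intro k hk
    refine lpsm_integrable_of_bdd ((hZ k).const_mul lam).exp (C := exp (|lam| * (|a k| + B))) fun ω => ?_
    rw [abs_of_pos (exp_pos _), exp_le_exp]
    obtain ⟨h1, h2⟩ := hab k hk ω
    calc lam * Z k ω ≤ |lam * Z k ω| := le_abs_self _
      _ = |lam| * |Z k ω| := abs_mul _ _
      _ ≤ |lam| * (|a k| + B) := by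
          refine mul_le_mul_of_nonneg_left ?_ (abs_nonneg lam)
          rw [abs_le]
          constructor
          · linarith [neg_abs_le (a k)]
          · linarith [le_abs_self (a k)]
  have hset : {ω | (t : ℝ) * ε ≤ ∑ k ∈ Finset.Icc 1 t, Z k ω}
      = {ω | (t : ℝ) * ε ≤ (∑ k ∈ Finset.Icc 1 t, Z k) ω} := by
    ext ω; simp [Finset.sum_apply]
  have hchern := measure_ge_le_exp_mul_mgf (μ := Pr) (X := ∑ k ∈ Finset.Icc 1 t, Z k)
    ((t : ℝ) * ε) hlam (hindep.integrable_exp_mul_sum hZ h_int)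
  rw [hset]
  refine hchern.trans ?_
  have hmgf : mgf (∑ k ∈ Finset.Icc 1 t, Z k) Pr lam ≤ exp ((t : ℝ) * (lam ^ 2 * B ^ 2 / 8)) := by
    rw [hindep.mgf_sum hZ]
    calc ∏ k ∈ Finset.Icc 1 t, mgf (Z k) Pr lam
        ≤ ∏ k ∈ Finset.Icc 1 t, exp (lam ^ 2 * B ^ 2 / 8) := by
          refine Finset.prod_le_prod (fun k _ => mgf_nonneg) fun k hk => ?_
          have := lpsm_hoeffding_mgf Pr (Z k) (hZ k) (a k) (a k + B) (hab k hk) (hmean k hk) lam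
          simpa using this
      _ = exp ((t : ℝ) * (lam ^ 2 * B ^ 2 / 8)) := by
          rw [Finset.prod_const, ← exp_nat_mul, Nat.card_Icc]
          simp
  calc exp (-lam * ((t : ℝ) * ε)) * mgf (∑ k ∈ Finset.Icc 1 t, Z k) Pr lam
      ≤ exp (-lam * ((t : ℝ) * ε)) * exp ((t : ℝ) * (lam ^ 2 * B ^ 2 / 8)) := by
        exact mul_le_mul_of_nonneg_left hmgf (exp_pos _).le
    _ = exp (-2 * t * ε ^ 2 / B ^ 2) := by
        rw [← exp_add]
        congr 1
        rw [hlam_def]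
        field_simp
        ring


lemma lpsm_exists_coord {𝒮 : Type*} [Fintype 𝒮] (w : 𝒮 → ℝ) (hπ0 : ∀ s, 0 ≤ w s)
    (hπ1 : ∑ s, w s = 1) (c : ℝ) (g : 𝒮 → ℝ) (hge : c ≤ ∑ s, w s * g s) : ∃ s, c ≤ g s := by
  by_contra hc
  push_neg at hc
  have hex : ∃ s, 0 < w s := by
    by_contra hz
    push_neg at hz
    have hzz : ∀ s, w s = 0 := fun s => le_antisymm (hz s) (hπ0 s)
    simp [hzz] at hπ1
  obtain ⟨s₀, hs₀⟩ := hex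
  have hlt : ∑ s, w s * g s < ∑ s, w s * c :=
    Finset.sum_lt_sum (fun i _ => mul_le_mul_of_nonneg_left (hc i).le (hπ0 i))
      ⟨s₀, Finset.mem_univ s₀, mul_lt_mul_of_pos_left (hc s₀) hs₀⟩
  rw [← Finset.sum_mul, hπ1, one_mul] at hlt
  linarith

end HoeffdingAux

/-- At any time `t ≥ 1`, the probability that some non-optimal policy has empirical
average reward at least that of the optimal policy is at most
`(1 + A) S exp(−Δ₁² t / (2 B₀²))`. -/
theorem lpsm_failure_prob_bound
    {Ω : Type*} [MeasurableSpace Ω] (Pr : Measure Ω) [IsProbabilityMeasure Pr]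
    {𝒳 : Type*} [MeasurableSpace 𝒳]
    (X : ℕ → Ω → 𝒳) (hXmeas : ∀ k, Measurable (X k))
    (hindep : iIndepFun X Pr)
    (hident : ∀ k, 1 ≤ k → IdentDistrib (X k) (X 1) Pr Pr)
    {𝒮 𝒜 : Type*} [Fintype 𝒮] [Fintype 𝒜] [Nonempty 𝒮] [Nonempty 𝒜]
    (f : 𝒮 → 𝒜 → 𝒳 → ℝ) (hfmeas : ∀ s a, Measurable (f s a))
    (B₀ : ℝ) (hB₀ : 0 < B₀)
    (hbd : ∀ s a x y, |f s a x - f s a y| ≤ B₀)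
    (μ : 𝒮 → 𝒜 → ℝ) (hμ : ∀ s a, μ s a = ∫ ω, f s a (X 1 ω) ∂Pr)
    (θ : ℕ → Ω → 𝒮 → 𝒜 → ℝ)
    (hθ : ∀ t ω s a, θ t ω s a = (∑ k ∈ Finset.Icc 1 t, f s a (X k ω)) / t)
    (𝓑 : Finset ((𝒮 → 𝒜) × (𝒮 → ℝ)))
    (hπ : ∀ β ∈ 𝓑, (∀ s, 0 ≤ β.2 s) ∧ ∑ s, β.2 s = 1)
    (ρ : ((𝒮 → 𝒜) × (𝒮 → ℝ)) → (𝒮 → 𝒜 → ℝ) → ℝ)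
    (hρ : ∀ β Θ, ρ β Θ = ∑ s, β.2 s * Θ s (β.1 s))
    (βs : (𝒮 → 𝒜) × (𝒮 → ℝ)) (hβs : βs ∈ 𝓑)
    (Δ₁ : ℝ) (hΔ₁ : 0 < Δ₁)
    (hgap : ∀ β ∈ 𝓑, β ≠ βs → ρ β μ + Δ₁ ≤ ρ βs μ)
    (F : ℕ → Set Ω)
    (hF : ∀ t, F t = {ω | ∃ β ∈ 𝓑, β ≠ βs ∧ ρ βs (θ t ω) ≤ ρ β (θ t ω)})
    (t : ℕ) (ht : 1 ≤ t) :
    (Pr (F t)).toReal ≤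
      (1 + (Fintype.card 𝒜 : ℝ)) * (Fintype.card 𝒮 : ℝ) *
        Real.exp (-(Δ₁ ^ 2) * t / (2 * B₀ ^ 2)) := by
  classical
  -- nonemptiness
  have hΩ : Nonempty Ω := by
    by_contra hc
    have h1 : (Pr Set.univ) = 1 := measure_univ
    have h2 : (Set.univ : Set Ω) = ∅ := by ext ω; exact absurd ⟨ω⟩ hc
    rw [h2, measure_empty] at h1
    exact zero_ne_one h1
  obtain ⟨ω₀⟩ := hΩ
  have htpos : (0:ℝ) < t := by exact_mod_cast ht
  -- bounds on f
  set lo : 𝒮 → 𝒜 → ℝ := fun s a => sInf (Set.range (f s a)) with hlo_def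
  have hbddbelow : ∀ s a, BddBelow (Set.range (f s a)) := by
    intro s a
    refine ⟨f s a (X 1 ω₀) - B₀, ?_⟩
    rintro y ⟨x, rfl⟩
    have := (abs_le.1 (hbd s a (X 1 ω₀) x)).2
    linarith
  have hlo_le : ∀ s a x, lo s a ≤ f s a x := fun s a x =>
    csInf_le (hbddbelow s a) ⟨x, rfl⟩
  have hle_hi : ∀ s a x, f s a x ≤ lo s a + B₀ := by
    intro s a x
    have h1 : f s a x - B₀ ≤ lo s a := by
      refine le_csInf ⟨f s a x, ⟨x, rfl⟩⟩ ?_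
      rintro y ⟨z, rfl⟩
      have := (abs_le.1 (hbd s a x z)).2
      linarith
    linarith
  have habs : ∀ s a x, |f s a x| ≤ |lo s a| + B₀ := by
    intro s a x
    rw [abs_le]
    constructor
    · have := hlo_le s a x; have := neg_abs_le (lo s a); linarith
    · have := hle_hi s a x; have := le_abs_self (lo s a); linarith
  -- integrability of f s a ∘ X k
  have hint : ∀ s a k, Integrable (fun ω => f s a (X k ω)) Pr := fun s a k =>
    lpsm_integrable_of_bdd ((hfmeas s a).comp (hXmeas k)) (fun ω => habs s a _)
  -- mean identity
  have hmeanval : ∀ s a k, 1 ≤ k → ∫ ω, f s a (X k ω) ∂Pr = μ s a := by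
    intro s a k hk
    rw [hμ]
    exact ((hident k hk).comp (hfmeas s a)).integral_eq
  -- bounds on μ
  have hμlo : ∀ s a, lo s a ≤ μ s a := by
    intro s a
    rw [hμ]
    have : ∫ _ω, lo s a ∂Pr ≤ ∫ ω, f s a (X 1 ω) ∂Pr :=
      integral_mono (integrable_const _) (hint s a 1) fun ω => hlo_le s a _
    simpa using this
  have hμhi : ∀ s a, μ s a ≤ lo s a + B₀ := by
    intro s a
    rw [hμ]
    have : ∫ ω, f s a (X 1 ω) ∂Pr ≤ ∫ _ω, (lo s a + B₀) ∂Pr :=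
      integral_mono (hint s a 1) (integrable_const _) fun ω => hle_hi s a _
    simpa using this
  -- the deviation events
  set c : ℝ := Δ₁ / 2 with hc_def
  have hcpos : 0 < c := by positivity
  set Ep : 𝒮 × 𝒜 → Set Ω := fun p =>
    {ω | (t : ℝ) * c ≤ ∑ k ∈ Finset.Icc 1 t, (f p.1 p.2 (X k ω) - μ p.1 p.2)} with hEp_def
  set Em : 𝒮 → Set Ω := fun s =>
    {ω | (t : ℝ) * c ≤ ∑ k ∈ Finset.Icc 1 t, (μ s (βs.1 s) - f s (βs.1 s) (X k ω))} with hEm_def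
  -- event inclusion
  have hsub : F t ⊆ (⋃ p : 𝒮 × 𝒜, Ep p) ∪ (⋃ s : 𝒮, Em s) := by
    intro ω hω
    rw [hF] at hω
    obtain ⟨β, hβ, hne, hle⟩ := hω
    have hgapβ := hgap β hβ hne
    have hkey : Δ₁ ≤ (ρ β (θ t ω) - ρ β μ) + (ρ βs μ - ρ βs (θ t ω)) := by linarith
    -- convert threshold to sum form
    have hconv : ∀ s a, c ≤ θ t ω s a - μ s a →
        (t : ℝ) * c ≤ ∑ k ∈ Finset.Icc 1 t, (f s a (X k ω) - μ s a) := by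
      intro s a hsa
      rw [hθ] at hsa
      have hsum : ∑ k ∈ Finset.Icc 1 t, (f s a (X k ω) - μ s a)
          = (∑ k ∈ Finset.Icc 1 t, f s a (X k ω)) - (t : ℝ) * μ s a := by
        rw [Finset.sum_sub_distrib, Finset.sum_const, Nat.card_Icc]
        simp [nsmul_eq_mul]
      rw [hsum]
      have h1 : c + μ s a ≤ (∑ k ∈ Finset.Icc 1 t, f s a (X k ω)) / t := by linarith
      have h2 := (le_div_iff₀ htpos).1 h1
      nlinarith
    have hconv' : ∀ s a, c ≤ μ s a - θ t ω s a →
        (t : ℝ) * c ≤ ∑ k ∈ Finset.Icc 1 t, (μ s a - f s a (X k ω)) := by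
      intro s a hsa
      rw [hθ] at hsa
      have hsum : ∑ k ∈ Finset.Icc 1 t, (μ s a - f s a (X k ω))
          = (t : ℝ) * μ s a - (∑ k ∈ Finset.Icc 1 t, f s a (X k ω)) := by
        rw [Finset.sum_sub_distrib, Finset.sum_const, Nat.card_Icc]
        simp [nsmul_eq_mul]
      rw [hsum]
      have h1 : (∑ k ∈ Finset.Icc 1 t, f s a (X k ω)) / t ≤ μ s a - c := by linarith
      have h2 := (div_le_iff₀ htpos).1 h1
      nlinarith
    rcases le_or_gt c (ρ βs μ - ρ βs (θ t ω)) with hcase | hcase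
    · -- optimal policy deviates downward
      right
      have hexp : ρ βs μ - ρ βs (θ t ω)
          = ∑ s, βs.2 s * (μ s (βs.1 s) - θ t ω s (βs.1 s)) := by
        rw [hρ, hρ, ← Finset.sum_sub_distrib]
        simp [mul_sub]
      rw [hexp] at hcase
      obtain ⟨s, hs⟩ := lpsm_exists_coord βs.2 (hπ βs hβs).1 (hπ βs hβs).2 c _ hcase
      exact Set.mem_iUnion.2 ⟨s, hconv' s (βs.1 s) hs⟩
    · -- the competing policy deviates upward
      left
      have hcase2 : c ≤ ρ β (θ t ω) - ρ β μ := by linarith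
      have hexp : ρ β (θ t ω) - ρ β μ
          = ∑ s, β.2 s * (θ t ω s (β.1 s) - μ s (β.1 s)) := by
        rw [hρ, hρ, ← Finset.sum_sub_distrib]
        simp [mul_sub]
      rw [hexp] at hcase2
      obtain ⟨s, hs⟩ := lpsm_exists_coord β.2 (hπ β hβ).1 (hπ β hβ).2 c _ hcase2
      exact Set.mem_iUnion.2 ⟨(s, β.1 s), hconv s (β.1 s) hs⟩
  -- per-event Hoeffding bounds
  set e : ℝ := Real.exp (-(Δ₁ ^ 2) * t / (2 * B₀ ^ 2)) with he_def
  have hexp_eq : Real.exp (-2 * t * c ^ 2 / B₀ ^ 2) = e := by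
    rw [he_def, hc_def]
    congr 1
    ring
  have hmean0 : ∀ s a k, k ∈ Finset.Icc 1 t →
      ∫ ω, (f s a (X k ω) - μ s a) ∂Pr = 0 := by
    intro s a k hk
    rw [integral_sub (hint s a k) (integrable_const _),
      hmeanval s a k (Finset.mem_Icc.1 hk).1, integral_const]
    simp
  have hEp_bound : ∀ p : 𝒮 × 𝒜, (Pr (Ep p)).toReal ≤ e := by
    intro p
    rw [← hexp_eq]
    refine lpsm_hoeffding_tail Pr (fun k ω => f p.1 p.2 (X k ω) - μ p.1 p.2)
      (fun k => ((hfmeas p.1 p.2).comp (hXmeas k)).sub_const _)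
      (hindep.comp (fun _ x => f p.1 p.2 x - μ p.1 p.2)
        (fun _ => (hfmeas p.1 p.2).sub_const _))
      t B₀ hB₀ (fun _ => lo p.1 p.2 - μ p.1 p.2)
      (fun k _ ω => by
        simp only [Set.mem_Icc]
        constructor
        · have := hlo_le p.1 p.2 (X k ω); linarith
        · have := hle_hi p.1 p.2 (X k ω); linarith)
      (fun k hk => hmean0 p.1 p.2 k hk) c hcpos
  have hEm_bound : ∀ s : 𝒮, (Pr (Em s)).toReal ≤ e := by
    intro s
    rw [← hexp_eq]
    refine lpsm_hoeffding_tail Pr (fun k ω => μ s (βs.1 s) - f s (βs.1 s) (X k ω))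
      (fun k => (measurable_const.sub ((hfmeas s (βs.1 s)).comp (hXmeas k))))
      (hindep.comp (fun _ x => μ s (βs.1 s) - f s (βs.1 s) x)
        (fun _ => measurable_const.sub (hfmeas s (βs.1 s))))
      t B₀ hB₀ (fun _ => μ s (βs.1 s) - (lo s (βs.1 s) + B₀))
      (fun k _ ω => by
        simp only [Set.mem_Icc]
        constructor
        · have := hle_hi s (βs.1 s) (X k ω); linarith
        · have := hlo_le s (βs.1 s) (X k ω); linarith)
      (fun k hk => ?_) c hcpos
    have := hmean0 s (βs.1 s) k hk
    rw [integral_sub (integrable_const _) (hint s (βs.1 s) k), integral_const]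
    rw [integral_sub (hint s (βs.1 s) k) (integrable_const _), integral_const] at this
    simp only [probReal_univ, ENNReal.toReal_one, smul_eq_mul, one_mul] at this ⊢
    linarith
  -- union bound
  have hmeas_le : Pr (F t) ≤ (∑ p : 𝒮 × 𝒜, Pr (Ep p)) + ∑ s : 𝒮, Pr (Em s) := by
    calc Pr (F t) ≤ Pr ((⋃ p : 𝒮 × 𝒜, Ep p) ∪ ⋃ s : 𝒮, Em s) := measure_mono hsub
      _ ≤ Pr (⋃ p : 𝒮 × 𝒜, Ep p) + Pr (⋃ s : 𝒮, Em s) := measure_union_le _ _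
      _ ≤ (∑ p : 𝒮 × 𝒜, Pr (Ep p)) + ∑ s : 𝒮, Pr (Em s) :=
          add_le_add (measure_iUnion_fintype_le _ _) (measure_iUnion_fintype_le _ _)
  have hfin1 : (∑ p : 𝒮 × 𝒜, Pr (Ep p)) ≠ ⊤ :=
    ENNReal.sum_ne_top.2 fun p _ => measure_ne_top _ _
  have hfin2 : (∑ s : 𝒮, Pr (Em s)) ≠ ⊤ :=
    ENNReal.sum_ne_top.2 fun s _ => measure_ne_top _ _
  have htoReal : (Pr (F t)).toReal ≤
      (∑ p : 𝒮 × 𝒜, (Pr (Ep p)).toReal) + ∑ s : 𝒮, (Pr (Em s)).toReal := by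
    have h1 := ENNReal.toReal_mono (ENNReal.add_ne_top.2 ⟨hfin1, hfin2⟩) hmeas_le
    rwa [ENNReal.toReal_add hfin1 hfin2,
      ENNReal.toReal_sum (fun p _ => measure_ne_top _ _),
      ENNReal.toReal_sum (fun s _ => measure_ne_top _ _)] at h1
  refine htoReal.trans ?_
  have hsum1 : (∑ p : 𝒮 × 𝒜, (Pr (Ep p)).toReal)
      ≤ (Fintype.card 𝒮 : ℝ) * (Fintype.card 𝒜 : ℝ) * e := by
    calc (∑ p : 𝒮 × 𝒜, (Pr (Ep p)).toReal) ≤ ∑ _p : 𝒮 × 𝒜, e :=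
        Finset.sum_le_sum fun p _ => hEp_bound p
      _ = (Fintype.card 𝒮 : ℝ) * (Fintype.card 𝒜 : ℝ) * e := by
        rw [Finset.sum_const, Finset.card_univ, Fintype.card_prod, nsmul_eq_mul]
        push_cast
        ring
  have hsum2 : (∑ s : 𝒮, (Pr (Em s)).toReal) ≤ (Fintype.card 𝒮 : ℝ) * e := by
    calc (∑ s : 𝒮, (Pr (Em s)).toReal) ≤ ∑ _s : 𝒮, e :=
        Finset.sum_le_sum fun s _ => hEm_bound s
      _ = (Fintype.card 𝒮 : ℝ) * e := by
        rw [Finset.sum_const, Finset.card_univ, nsmul_eq_mul]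
  calc (∑ p : 𝒮 × 𝒜, (Pr (Ep p)).toReal) + ∑ s : 𝒮, (Pr (Em s)).toReal
      ≤ (Fintype.card 𝒮 : ℝ) * (Fintype.card 𝒜 : ℝ) * e + (Fintype.card 𝒮 : ℝ) * e :=
        add_le_add hsum1 hsum2
    _ = (1 + (Fintype.card 𝒜 : ℝ)) * (Fintype.card 𝒮 : ℝ) * e := by ring
end

section
/- The expected number of slots in which a non-optimal policy can be selected by LPSM satisfies 𝔼[ 1 + Σ_{t=1}^∞ 1_{F_t} ] ≤ 1 + (1 + A) · S / ( exp(Δ₁²/(2B₀²)) − 1 ). In particular, Σ_{t=1}^∞ 1_{F_t} is almost surely finite. -/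
open MeasureTheory ProbabilityTheory

open scoped ENNReal

section LpsmAux

open Real


lemma hoeff_scalar {p : ℝ} (hp0 : 0 ≤ p) (hp1 : p ≤ 1) (h : ℝ) :
    (1 - p) * Real.exp (-p * h) + p * Real.exp ((1 - p) * h) ≤ Real.exp (h ^ 2 / 8) := by
  have hDpos : ∀ x : ℝ, 0 < 1 - p + p * Real.exp x := by
    intro x
    rcases hp0.eq_or_lt with h0 | h0
    · simp [← h0]
    · exact add_pos_of_nonneg_of_pos (sub_nonneg.2 hp1) (mul_pos h0 (exp_pos x))
  set g : ℝ → ℝ := fun x => x ^ 2 / 8 + p * x - Real.log (1 - p + p * Real.exp x) with hg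
  set g' : ℝ → ℝ := fun x => x / 4 + p - p * Real.exp x / (1 - p + p * Real.exp x) with hg'
  have hD : ∀ x : ℝ, HasDerivAt (fun x => 1 - p + p * Real.exp x) (p * Real.exp x) x := by
    intro x
    exact ((Real.hasDerivAt_exp x).const_mul p).const_add (1 - p)
  have hdg : ∀ x, HasDerivAt g (g' x) x := by
    intro x
    have h1 : HasDerivAt (fun x : ℝ => x ^ 2 / 8 + p * x)
        (x / 4 + p) x := by
      have := ((hasDerivAt_pow 2 x).div_const 8).add ((hasDerivAt_id x).const_mul p)
      convert this using 1
      · rfl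
      · rfl
      · rfl
      · norm_num
        ring
    have h2 := (hD x).log (hDpos x).ne'
    exact h1.sub h2
  have hdg' : ∀ x, HasDerivAt g'
      (1/4 - (p * Real.exp x * (1 - p + p * Real.exp x)
        - p * Real.exp x * (p * Real.exp x)) / (1 - p + p * Real.exp x) ^ 2) x := by
    intro x
    have h1 : HasDerivAt (fun x : ℝ => x / 4 + p) (1/4) x := by
      simpa using ((hasDerivAt_id x).div_const 4).add_const p
    have h2 := (((Real.hasDerivAt_exp x).const_mul p).div (hD x) (hDpos x).ne')
    exact h1.sub h2
  have hg'nonneg : ∀ x, 0 ≤ 1/4 - (p * Real.exp x * (1 - p + p * Real.exp x)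
        - p * Real.exp x * (p * Real.exp x)) / (1 - p + p * Real.exp x) ^ 2 := by
    intro x
    have hD2 : 0 < (1 - p + p * Real.exp x) ^ 2 := pow_pos (hDpos x) 2
    rw [sub_nonneg, div_le_iff₀ hD2]
    nlinarith [sq_nonneg ((1 - p) - p * Real.exp x), (exp_pos x).le, mul_nonneg hp0 (exp_pos x).le]
  have hmono : Monotone g' := by
    apply monotone_of_deriv_nonneg
    · exact fun x => (hdg' x).differentiableAt
    · intro x
      rw [(hdg' x).deriv]
      exact hg'nonneg x
  have hg'0 : g' 0 = 0 := by
    simp [hg']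
  have hgcont : Continuous g := by
    have : Differentiable ℝ g := fun x => (hdg x).differentiableAt
    exact this.continuous
  have hg0 : g 0 = 0 := by simp [hg]
  have key : ∀ x, 0 ≤ g x := by
    intro x
    rcases le_total 0 x with hx | hx
    · have hm : MonotoneOn g (Set.Ici 0) := by
        apply monotoneOn_of_deriv_nonneg (convex_Ici 0) hgcont.continuousOn
        · intro y _
          exact (hdg y).differentiableAt.differentiableWithinAt
        · intro y hy
          rw [(hdg y).deriv]
          have hy0 : (0:ℝ) ≤ y := le_of_lt (by simpa [interior_Ici] using hy)
          have := hmono hy0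
          rw [hg'0] at this
          exact this
      have := hm (Set.self_mem_Ici) (Set.mem_Ici.2 hx) hx
      rwa [hg0] at this
    · have hm : AntitoneOn g (Set.Iic 0) := by
        apply antitoneOn_of_deriv_nonpos (convex_Iic 0) hgcont.continuousOn
        · intro y _
          exact (hdg y).differentiableAt.differentiableWithinAt
        · intro y hy
          rw [(hdg y).deriv]
          have hy0 : y ≤ 0 := le_of_lt (by simpa [interior_Iic] using hy)
          have := hmono hy0
          rw [hg'0] at this
          exact this
      have := hm (Set.mem_Iic.2 hx) Set.self_mem_Iic hx
      rwa [hg0] at this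
  -- now conclude
  have hkey := key h
  have hlog : Real.log (1 - p + p * Real.exp h) ≤ h ^ 2 / 8 + p * h := by
    have := hkey
    simp only [hg] at this
    linarith
  have hexp : 1 - p + p * Real.exp h ≤ Real.exp (h ^ 2 / 8 + p * h) := by
    rw [← Real.exp_log (hDpos h)]
    exact Real.exp_le_exp.2 hlog
  calc (1 - p) * Real.exp (-p * h) + p * Real.exp ((1 - p) * h)
      = Real.exp (-(p*h)) * (1 - p + p * Real.exp h) := by
        rw [show (1-p)*h = -(p*h) + h by ring, Real.exp_add,
          show -p*h = -(p*h) by ring]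
        ring
    _ ≤ Real.exp (-(p*h)) * Real.exp (h ^ 2 / 8 + p * h) := by
        exact mul_le_mul_of_nonneg_left hexp (exp_pos _).le
    _ = Real.exp (h ^ 2 / 8) := by rw [← Real.exp_add, show -(p*h) + (h^2/8 + p*h) = h^2/8 by ring]



lemma hoeffding_lemma {Ω : Type*} [MeasurableSpace Ω] (μ : Measure Ω) [IsProbabilityMeasure μ]
    {X : Ω → ℝ} (hX : Measurable X) {a b : ℝ}
    (hmem : ∀ ω, X ω ∈ Set.Icc a b) (hmean : ∫ ω, X ω ∂μ = 0) (t : ℝ) :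
    mgf X μ t ≤ Real.exp (t ^ 2 * (b - a) ^ 2 / 8) := by
  have hΩ : Nonempty Ω := by
    by_contra hne
    rw [not_nonempty_iff] at hne
    have h1 : μ Set.univ = 1 := measure_univ
    rw [Set.univ_eq_empty_iff.2 hne] at h1
    simp at h1
  -- integrability of X
  have hXint : Integrable X μ := by
    refine Integrable.mono' (integrable_const (max |a| |b|)) hX.aestronglyMeasurable ?_
    refine Filter.Eventually.of_forall fun ω => ?_
    rcases hmem ω with ⟨h1, h2⟩
    rw [Real.norm_eq_abs, abs_le]
    constructor
    · calc -(max |a| |b|) ≤ -|a| := by simp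
        _ ≤ a := neg_abs_le a
        _ ≤ X ω := h1
    · calc X ω ≤ b := h2
        _ ≤ |b| := le_abs_self b
        _ ≤ max |a| |b| := le_max_right _ _
  have ha0 : a ≤ 0 := by
    have : ∫ ω, X ω ∂μ ≥ ∫ (_ : Ω), a ∂μ := by
      apply integral_mono (integrable_const a) hXint
      intro ω; exact (hmem ω).1
    rw [integral_const] at this
    simp [hmean] at this
    linarith [this]
  have hb0 : 0 ≤ b := by
    have : ∫ ω, X ω ∂μ ≤ ∫ (_ : Ω), b ∂μ := by
      apply integral_mono hXint (integrable_const b)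
      intro ω; exact (hmem ω).2
    rw [integral_const] at this
    simp [hmean] at this
    linarith [this]
  rcases eq_or_lt_of_le (ha0.trans hb0) with hab | hab
  · -- a = b, so a = b = 0 and X = 0
    have haz : a = 0 := le_antisymm ha0 (by rw [hab]; exact hb0)
    have hbz : b = 0 := by rw [← hab, haz]
    have hX0 : ∀ ω, X ω = 0 := fun ω => le_antisymm (hbz ▸ (hmem ω).2) (haz ▸ (hmem ω).1)
    have : mgf X μ t = 1 := by
      rw [mgf]
      simp only [hX0, mul_zero, Real.exp_zero]
      simp
    rw [this]
    exact Real.one_le_exp (by positivity)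
  -- main case a < b
  set p : ℝ := -a / (b - a) with hp
  have hba : 0 < b - a := sub_pos.2 hab
  have hp0 : 0 ≤ p := div_nonneg (by linarith) hba.le
  have hp1 : p ≤ 1 := by
    rw [div_le_one hba]; linarith
  -- pointwise convexity bound
  have hconv : ∀ ω, Real.exp (t * X ω) ≤
      (b - X ω) / (b - a) * Real.exp (t * a) + (X ω - a) / (b - a) * Real.exp (t * b) := by
    intro ω
    rcases hmem ω with ⟨h1, h2⟩
    have w1 : 0 ≤ (b - X ω) / (b - a) := div_nonneg (by linarith) hba.le
    have w2 : 0 ≤ (X ω - a) / (b - a) := div_nonneg (by linarith) hba.le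
    have wsum : (b - X ω) / (b - a) + (X ω - a) / (b - a) = 1 := by
      rw [← add_div, div_eq_one_iff_eq hba.ne']
      ring
    have := convexOn_exp.2 (Set.mem_univ (t * a)) (Set.mem_univ (t * b)) w1 w2 wsum
    simp only [smul_eq_mul] at this
    have harg : (b - X ω) / (b - a) * (t * a) + (X ω - a) / (b - a) * (t * b) = t * X ω := by
      field_simp
      ring
    rwa [harg] at this
  -- integrate
  have hint_exp : Integrable (fun ω => Real.exp (t * X ω)) μ := by
    refine Integrable.mono' (integrable_const (Real.exp (|t| * max |a| |b|)))
      ((hX.const_mul t).exp).aestronglyMeasurable ?_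
    refine Filter.Eventually.of_forall fun ω => ?_
    rw [Real.norm_eq_abs, abs_of_pos (Real.exp_pos _)]
    apply Real.exp_le_exp.2
    calc t * X ω ≤ |t * X ω| := le_abs_self _
      _ = |t| * |X ω| := abs_mul _ _
      _ ≤ |t| * max |a| |b| := by
          apply mul_le_mul_of_nonneg_left _ (abs_nonneg t)
          rcases hmem ω with ⟨h1, h2⟩
          rw [abs_le]
          constructor
          · calc -(max |a| |b|) ≤ -|a| := by simp
              _ ≤ a := neg_abs_le a
              _ ≤ X ω := h1
          · calc X ω ≤ b := h2
              _ ≤ |b| := le_abs_self b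
              _ ≤ max |a| |b| := le_max_right _ _
  have hi1 : Integrable (fun ω => (b - X ω) / (b - a) * Real.exp (t * a)) μ :=
    (((integrable_const b).sub hXint).div_const (b - a)).mul_const _
  have hi2 : Integrable (fun ω => (X ω - a) / (b - a) * Real.exp (t * b)) μ :=
    ((hXint.sub (integrable_const a)).div_const (b - a)).mul_const _
  have hrhs_int : Integrable (fun ω =>
      (b - X ω) / (b - a) * Real.exp (t * a) + (X ω - a) / (b - a) * Real.exp (t * b)) μ := by
    exact hi1.add hi2
  have hmgf_le : mgf X μ t ≤
      b / (b - a) * Real.exp (t * a) + (-a) / (b - a) * Real.exp (t * b) := by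
    rw [mgf]
    calc ∫ ω, Real.exp (t * X ω) ∂μ
        ≤ ∫ ω, ((b - X ω) / (b - a) * Real.exp (t * a)
            + (X ω - a) / (b - a) * Real.exp (t * b)) ∂μ :=
          integral_mono hint_exp hrhs_int hconv
      _ = b / (b - a) * Real.exp (t * a) + (-a) / (b - a) * Real.exp (t * b) := by
          rw [integral_add hi1 hi2, integral_mul_const, integral_mul_const]
          have h1 : ∫ ω, (b - X ω) / (b - a) ∂μ = b / (b - a) := by
            simp_rw [div_eq_mul_inv]
            rw [integral_mul_const, integral_sub (integrable_const b) hXint, hmean,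
              integral_const]
            simp
          have h2 : ∫ ω, (X ω - a) / (b - a) ∂μ = -a / (b - a) := by
            simp_rw [div_eq_mul_inv]
            rw [integral_mul_const, integral_sub hXint (integrable_const a), hmean,
              integral_const]
            simp
          rw [h1, h2]
  -- apply scalar lemma with h := t * (b - a)
  have hscal := hoeff_scalar hp0 hp1 (t * (b - a))
  have e1 : -p * (t * (b - a)) = t * a := by
    rw [hp]; field_simp
  have e2 : (1 - p) * (t * (b - a)) = t * b := by
    rw [hp]; field_simp; ring
  have e3 : (1 - p) = b / (b - a) := by
    rw [hp]; field_simp; ring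
  have e4 : (t * (b - a)) ^ 2 / 8 = t ^ 2 * (b - a) ^ 2 / 8 := by ring
  rw [e1, e2, e3, e4] at hscal
  exact hmgf_le.trans hscal



lemma hoeffding_tail {Ω : Type*} [MeasurableSpace Ω] (Pr : Measure Ω) [IsProbabilityMeasure Pr]
    (Y : ℕ → Ω → ℝ) (hmeas : ∀ k, Measurable (Y k))
    (hindep : iIndepFun Y Pr)
    (hident : ∀ k, 1 ≤ k → IdentDistrib (Y k) (Y 1) Pr Pr)
    {a b : ℝ} (hmem : ∀ k ω, Y k ω ∈ Set.Icc a b)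
    (hmean : ∫ ω, Y 1 ω ∂Pr = 0)
    {B₀ : ℝ} (hB₀ : 0 < B₀) (hba : b - a ≤ B₀)
    {ε : ℝ} (hε : 0 < ε) (t : ℕ) :
    Pr {ω | (t : ℝ) * ε ≤ ∑ k ∈ Finset.Icc 1 t, Y k ω}
      ≤ ENNReal.ofReal (Real.exp (-(2 * t * ε ^ 2 / B₀ ^ 2))) := by
  have hΩ : Nonempty Ω := by
    by_contra hne
    rw [not_nonempty_iff] at hne
    have h1 : Pr Set.univ = 1 := measure_univ
    rw [Set.univ_eq_empty_iff.2 hne] at h1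
    simp at h1
  have hab : a ≤ b := by
    obtain ⟨ω⟩ := hΩ
    rcases hmem 1 ω with ⟨h1, h2⟩
    linarith
  set lam : ℝ := 4 * ε / B₀ ^ 2 with hlam
  have hlam0 : 0 ≤ lam := by positivity
  -- integrability of exp (lam * Y k)
  have hint : ∀ k, Integrable (fun ω => Real.exp (lam * Y k ω)) Pr := by
    intro k
    refine Integrable.mono' (integrable_const (Real.exp (|lam| * max |a| |b|)))
      (((hmeas k).const_mul lam).exp).aestronglyMeasurable ?_
    refine Filter.Eventually.of_forall fun ω => ?_
    rw [Real.norm_eq_abs, abs_of_pos (Real.exp_pos _)]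
    apply Real.exp_le_exp.2
    calc lam * Y k ω ≤ |lam * Y k ω| := le_abs_self _
      _ = |lam| * |Y k ω| := abs_mul _ _
      _ ≤ |lam| * max |a| |b| := by
          apply mul_le_mul_of_nonneg_left _ (abs_nonneg lam)
          rcases hmem k ω with ⟨h1, h2⟩
          rw [abs_le]
          exact ⟨by rcases abs_cases a with ⟨e,_⟩|⟨e,_⟩ <;> nlinarith [le_max_left |a| |b|],
            by nlinarith [le_abs_self b, le_max_right |a| |b|]⟩
  -- Chernoff
  have hSint : Integrable (fun ω => Real.exp (lam * (∑ k ∈ Finset.Icc 1 t, Y k) ω)) Pr := by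
    exact hindep.integrable_exp_mul_sum hmeas (fun k _ => hint k)
  have hcher := measure_ge_le_exp_mul_mgf (μ := Pr) (X := ∑ k ∈ Finset.Icc 1 t, Y k)
    ((t : ℝ) * ε) hlam0 hSint
  -- mgf of the sum
  have hmgf_sum := hindep.mgf_sum (t := lam) hmeas (Finset.Icc 1 t)
  have hmgf_each : ∀ k ∈ Finset.Icc 1 t, mgf (Y k) Pr lam = mgf (Y 1) Pr lam := by
    intro k hk
    have hk1 : 1 ≤ k := (Finset.mem_Icc.1 hk).1
    have hid := (hident k hk1).comp (u := fun x : ℝ => Real.exp (lam * x))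
      ((measurable_id.const_mul lam).exp)
    exact hid.integral_eq
  have hmgf1 : mgf (Y 1) Pr lam ≤ Real.exp (lam ^ 2 * (b - a) ^ 2 / 8) :=
    hoeffding_lemma Pr (hmeas 1) (hmem 1) hmean lam
  have hprod : mgf (∑ k ∈ Finset.Icc 1 t, Y k) Pr lam
      ≤ Real.exp (lam ^ 2 * (b - a) ^ 2 / 8) ^ t := by
    rw [hmgf_sum, Finset.prod_congr rfl hmgf_each, Finset.prod_const,
      Nat.card_Icc]
    simp only [Nat.add_sub_cancel]
    exact pow_le_pow_left₀ mgf_nonneg hmgf1 t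
  -- put together
  have hfinal : (Pr {ω | (t : ℝ) * ε ≤ (∑ k ∈ Finset.Icc 1 t, Y k) ω}).toReal
      ≤ Real.exp (-(2 * t * ε ^ 2 / B₀ ^ 2)) := by
    calc (Pr {ω | (t : ℝ) * ε ≤ (∑ k ∈ Finset.Icc 1 t, Y k) ω}).toReal
        ≤ Real.exp (-lam * ((t:ℝ) * ε)) * mgf (∑ k ∈ Finset.Icc 1 t, Y k) Pr lam := hcher
      _ ≤ Real.exp (-lam * ((t:ℝ) * ε)) * Real.exp (lam ^ 2 * (b - a) ^ 2 / 8) ^ t := by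
          exact mul_le_mul_of_nonneg_left hprod (Real.exp_pos _).le
      _ = Real.exp (-lam * ((t:ℝ) * ε) + t * (lam ^ 2 * (b - a) ^ 2 / 8)) := by
          rw [← Real.exp_nat_mul, ← Real.exp_add]
      _ ≤ Real.exp (-(2 * t * ε ^ 2 / B₀ ^ 2)) := by
          apply Real.exp_le_exp.2
          have hba2 : (b - a) ^ 2 ≤ B₀ ^ 2 := by nlinarith
          have h1 : (t:ℝ) * (lam ^ 2 * (b - a) ^ 2 / 8) ≤ (t:ℝ) * (lam ^ 2 * B₀ ^ 2 / 8) := by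
            have := t.cast_nonneg (α := ℝ)
            apply mul_le_mul_of_nonneg_left _ this
            apply div_le_div_of_nonneg_right _ (by norm_num)  -- careful
            exact mul_le_mul_of_nonneg_left hba2 (sq_nonneg lam)
          have h2 : -lam * ((t:ℝ) * ε) + (t:ℝ) * (lam ^ 2 * B₀ ^ 2 / 8)
              = -(2 * t * ε ^ 2 / B₀ ^ 2) := by
            rw [hlam]
            field_simp
            ring
          linarith
  have hne : Pr {ω | (t : ℝ) * ε ≤ (∑ k ∈ Finset.Icc 1 t, Y k) ω} ≠ ⊤ := measure_ne_top _ _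
  have := ENNReal.ofReal_le_ofReal hfinal
  rw [ENNReal.ofReal_toReal hne] at this
  convert this using 3
  simp [Finset.sum_apply]


lemma exists_ge_of_weighted_sum {ι : Type*} [Fintype ι] (w v : ι → ℝ) (hw : ∀ i, 0 ≤ w i)
    (hsum : ∑ i, w i = 1) {c : ℝ} (hc : c ≤ ∑ i, w i * v i) : ∃ i, c ≤ v i := by
  by_contra hcon
  push_neg at hcon
  have hex : ∃ i : ι, 0 < w i := by
    by_contra hz
    push_neg at hz
    have : ∑ i, w i = 0 := Finset.sum_eq_zero fun i _ => le_antisymm (hz i) (hw i)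
    rw [this] at hsum; norm_num at hsum
  obtain ⟨i0, hi0⟩ := hex
  have hlt : ∑ i, w i * v i < ∑ i, w i * c := by
    apply Finset.sum_lt_sum
    · intro i _; exact mul_le_mul_of_nonneg_left (hcon i).le (hw i)
    · exact ⟨i0, Finset.mem_univ i0, mul_lt_mul_of_pos_left (hcon i0) hi0⟩
  rw [← Finset.sum_mul, hsum, one_mul] at hlt
  linarith

end LpsmAux

/-- The expected number of slots in which LPSM can select a non-optimal policy is at
most `1 + (1 + A) S / (exp(Δ₁²/(2B₀²)) − 1)`; in particular the number of failure
slots is almost surely finite. -/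
theorem lpsm_expected_nonoptimal_slots
    {Ω : Type*} [MeasurableSpace Ω] (Pr : Measure Ω) [IsProbabilityMeasure Pr]
    {𝒳 : Type*} [MeasurableSpace 𝒳]
    (X : ℕ → Ω → 𝒳) (hXmeas : ∀ k, Measurable (X k))
    (hindep : iIndepFun X Pr)
    (hident : ∀ k, 1 ≤ k → IdentDistrib (X k) (X 1) Pr Pr)
    {𝒮 𝒜 : Type*} [Fintype 𝒮] [Fintype 𝒜] [Nonempty 𝒮] [Nonempty 𝒜]
    (f : 𝒮 → 𝒜 → 𝒳 → ℝ) (hfmeas : ∀ s a, Measurable (f s a))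
    (B₀ : ℝ) (hB₀ : 0 < B₀)
    (hbd : ∀ s a x y, |f s a x - f s a y| ≤ B₀)
    (μ : 𝒮 → 𝒜 → ℝ) (hμ : ∀ s a, μ s a = ∫ ω, f s a (X 1 ω) ∂Pr)
    (θ : ℕ → Ω → 𝒮 → 𝒜 → ℝ)
    (hθ : ∀ t ω s a, θ t ω s a = (∑ k ∈ Finset.Icc 1 t, f s a (X k ω)) / t)
    (𝓑 : Finset ((𝒮 → 𝒜) × (𝒮 → ℝ)))
    (hπ : ∀ β ∈ 𝓑, (∀ s, 0 ≤ β.2 s) ∧ ∑ s, β.2 s = 1)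
    (ρ : ((𝒮 → 𝒜) × (𝒮 → ℝ)) → (𝒮 → 𝒜 → ℝ) → ℝ)
    (hρ : ∀ β Θ, ρ β Θ = ∑ s, β.2 s * Θ s (β.1 s))
    (βs : (𝒮 → 𝒜) × (𝒮 → ℝ)) (hβs : βs ∈ 𝓑)
    (Δ₁ : ℝ) (hΔ₁ : 0 < Δ₁)
    (hgap : ∀ β ∈ 𝓑, β ≠ βs → ρ β μ + Δ₁ ≤ ρ βs μ)
    (F : ℕ → Set Ω)
    (hF : ∀ t, F t = {ω | ∃ β ∈ 𝓑, β ≠ βs ∧ ρ βs (θ t ω) ≤ ρ β (θ t ω)})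
    :
    (∫⁻ ω, (1 + ∑' t : ℕ, (F (t + 1)).indicator (fun _ => (1 : ℝ≥0∞)) ω) ∂Pr
        ≤ ENNReal.ofReal (1 + (1 + (Fintype.card 𝒜 : ℝ)) * (Fintype.card 𝒮 : ℝ) /
            (Real.exp (Δ₁ ^ 2 / (2 * B₀ ^ 2)) - 1))) ∧
      (∀ᵐ ω ∂Pr, (∑' t : ℕ, (F (t + 1)).indicator (fun _ => (1 : ℝ≥0∞)) ω) < ⊤) := by
  classical
  have hΩ : Nonempty Ω := by
    by_contra hne
    rw [not_nonempty_iff] at hne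
    have h1 : Pr Set.univ = 1 := measure_univ
    rw [Set.univ_eq_empty_iff.2 hne] at h1
    simp at h1
  set c : ℝ := Δ₁ ^ 2 / (2 * B₀ ^ 2) with hc
  have hcpos : 0 < c := by positivity
  -- bounds on f
  have hX1 : Nonempty 𝒳 := hΩ.elim fun ω => ⟨X 1 ω⟩
  set m : 𝒮 → 𝒜 → ℝ := fun s a => sInf (Set.range (f s a)) with hm
  have hfmem : ∀ s a x, f s a x ∈ Set.Icc (m s a) (m s a + B₀) := by
    intro s a x
    obtain ⟨x0⟩ := hX1
    have hbdd : BddBelow (Set.range (f s a)) := by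
      refine ⟨f s a x0 - B₀, fun y hy => ?_⟩
      obtain ⟨x', rfl⟩ := hy
      have := abs_le.1 (hbd s a x0 x')
      linarith [this.2]
    constructor
    · exact csInf_le hbdd (Set.mem_range_self x)
    · have : f s a x - B₀ ≤ m s a := by
        apply le_csInf ⟨f s a x, Set.mem_range_self x⟩
        rintro y ⟨x', rfl⟩
        have := abs_le.1 (hbd s a x x')
        linarith [this.1]
      linarith
  -- integrability of f s a ∘ X k
  have hfint : ∀ s a (k : ℕ), Integrable (fun ω => f s a (X k ω)) Pr := by
    intro s a k
    refine Integrable.mono' (integrable_const (max |m s a| |m s a + B₀|))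
      ((hfmeas s a).comp (hXmeas k)).aestronglyMeasurable ?_
    refine Filter.Eventually.of_forall fun ω => ?_
    rcases hfmem s a (X k ω) with ⟨h1, h2⟩
    rw [Real.norm_eq_abs, abs_le]
    constructor
    · calc -(max |m s a| |m s a + B₀|) ≤ -|m s a| := by simp
        _ ≤ m s a := neg_abs_le _
        _ ≤ f s a (X k ω) := h1
    · calc f s a (X k ω) ≤ m s a + B₀ := h2
        _ ≤ |m s a + B₀| := le_abs_self _
        _ ≤ max |m s a| |m s a + B₀| := le_max_right _ _
  -- the two families of tail events
  set G : ℕ → 𝒮 → 𝒜 → Set Ω := fun n s a =>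
    {ω | (n : ℝ) * (Δ₁ / 2) ≤ ∑ k ∈ Finset.Icc 1 n, (f s a (X k ω) - μ s a)} with hG
  set H : ℕ → 𝒮 → Set Ω := fun n s =>
    {ω | (n : ℝ) * (Δ₁ / 2) ≤ ∑ k ∈ Finset.Icc 1 n, (μ s (βs.1 s) - f s (βs.1 s) (X k ω))}
    with hH
  have hmean0 : ∀ s a, ∫ ω, (f s a (X 1 ω) - μ s a) ∂Pr = 0 := by
    intro s a
    rw [integral_sub (hfint s a 1) (integrable_const _), integral_const]
    simp [hμ s a]
  have hεpos : 0 < Δ₁ / 2 := by linarith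
  have hexp_eq : ∀ n : ℕ, -(2 * (n : ℝ) * (Δ₁ / 2) ^ 2 / B₀ ^ 2) = -((n : ℝ) * c) := by
    intro n
    rw [hc]
    field_simp
  have keyG : ∀ (s : 𝒮) (a : 𝒜) (n : ℕ),
      Pr (G n s a) ≤ ENNReal.ofReal (Real.exp (-((n : ℝ) * c))) := by
    intro s a n
    have := hoeffding_tail Pr (fun k ω => f s a (X k ω) - μ s a)
      (fun k => ((hfmeas s a).comp (hXmeas k)).sub measurable_const)
      (hindep.comp (fun _ x => f s a x - μ s a)
        (fun _ => (hfmeas s a).sub measurable_const))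
      (fun k hk => (hident k hk).comp (u := fun x => f s a x - μ s a)
        ((hfmeas s a).sub measurable_const))
      (a := m s a - μ s a) (b := m s a + B₀ - μ s a)
      (fun k ω => by
        rcases hfmem s a (X k ω) with ⟨h1, h2⟩
        exact Set.mem_Icc.2 ⟨by show m s a - μ s a ≤ f s a (X k ω) - μ s a; linarith,
          by show f s a (X k ω) - μ s a ≤ m s a + B₀ - μ s a; linarith⟩)
      (hmean0 s a) hB₀ (by linarith) hεpos n
    rw [hexp_eq n] at this
    exact this
  have keyH : ∀ (s : 𝒮) (n : ℕ),
      Pr (H n s) ≤ ENNReal.ofReal (Real.exp (-((n : ℝ) * c))) := by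
    intro s n
    set a := βs.1 s
    have := hoeffding_tail Pr (fun k ω => μ s a - f s a (X k ω))
      (fun k => measurable_const.sub ((hfmeas s a).comp (hXmeas k)))
      (hindep.comp (fun _ x => μ s a - f s a x)
        (fun _ => measurable_const.sub (hfmeas s a)))
      (fun k hk => (hident k hk).comp (u := fun x => μ s a - f s a x)
        (measurable_const.sub (hfmeas s a)))
      (a := μ s a - (m s a + B₀)) (b := μ s a - m s a)
      (fun k ω => by
        rcases hfmem s a (X k ω) with ⟨h1, h2⟩
        exact Set.mem_Icc.2 ⟨by show μ s a - (m s a + B₀) ≤ μ s a - f s a (X k ω); linarith,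
          by show μ s a - f s a (X k ω) ≤ μ s a - m s a; linarith⟩)
      (by
        rw [integral_sub (integrable_const _) (hfint s a 1), integral_const]
        simp [hμ s a])
      hB₀ (by linarith) hεpos n
    rw [hexp_eq n] at this
    exact this
  -- measurability
  have hθmeas : ∀ (n : ℕ) (s : 𝒮) (a : 𝒜), Measurable (fun ω => θ n ω s a) := by
    intro n s a
    have heq : (fun ω => θ n ω s a)
        = fun ω => (∑ k ∈ Finset.Icc 1 n, f s a (X k ω)) / (n : ℝ) := by
      funext ω; rw [hθ]
    rw [heq]
    exact (Finset.measurable_sum _ (fun k _ => (hfmeas s a).comp (hXmeas k))).div_const _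
  have hρθ : ∀ β (n : ℕ), Measurable (fun ω => ρ β (θ n ω)) := by
    intro β n
    have heq : (fun ω => ρ β (θ n ω)) = fun ω => ∑ s, β.2 s * θ n ω s (β.1 s) := by
      funext ω; rw [hρ]
    rw [heq]
    exact Finset.measurable_sum _ fun s _ => ((hθmeas n s (β.1 s)).const_mul _)
  have hFmeas : ∀ n, MeasurableSet (F n) := by
    intro n
    rw [hF]
    have heq : {ω | ∃ β ∈ 𝓑, β ≠ βs ∧ ρ βs (θ n ω) ≤ ρ β (θ n ω)}
        = ⋃ β ∈ 𝓑, {ω | β ≠ βs ∧ ρ βs (θ n ω) ≤ ρ β (θ n ω)} := by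
      ext ω; simp only [Set.mem_setOf_eq, Set.mem_iUnion, exists_prop]
    rw [heq]
    refine Set.Finite.measurableSet_biUnion 𝓑.finite_toSet fun β _ => ?_
    by_cases hne : β = βs
    · convert MeasurableSet.empty
      ext ω; simp [hne]
    · have heq2 : {ω | β ≠ βs ∧ ρ βs (θ n ω) ≤ ρ β (θ n ω)}
          = {ω | ρ βs (θ n ω) ≤ ρ β (θ n ω)} := by
        ext ω; simp [hne]
      rw [heq2]
      exact measurableSet_le (hρθ βs n) (hρθ β n)
  -- inclusion of the failure event in tail events
  have hsub : ∀ t : ℕ, F (t+1) ⊆ (⋃ s, ⋃ a, G (t+1) s a) ∪ (⋃ s, H (t+1) s) := by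
    intro t ω hω
    rw [hF] at hω
    obtain ⟨β, hβ, hne, hle⟩ := hω
    have hnpos : (0:ℝ) < ((t+1 : ℕ) : ℝ) := by positivity
    have hΔ : Δ₁ ≤ (ρ βs μ - ρ βs (θ (t+1) ω)) + (ρ β (θ (t+1) ω) - ρ β μ) := by
      have := hgap β hβ hne
      linarith
    rcases le_or_gt (Δ₁/2) (ρ β (θ (t+1) ω) - ρ β μ) with hcase | hcase
    · -- deviation for β
      have heq : ρ β (θ (t+1) ω) - ρ β μ
          = ∑ s, β.2 s * (θ (t+1) ω s (β.1 s) - μ s (β.1 s)) := by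
        rw [hρ, hρ, ← Finset.sum_sub_distrib]
        exact Finset.sum_congr rfl fun s _ => (mul_sub _ _ _).symm
      rw [heq] at hcase
      obtain ⟨s, hs⟩ := exists_ge_of_weighted_sum β.2
        (fun s => θ (t+1) ω s (β.1 s) - μ s (β.1 s)) (hπ β hβ).1 (hπ β hβ).2 hcase
      left
      refine Set.mem_iUnion.2 ⟨s, Set.mem_iUnion.2 ⟨β.1 s, ?_⟩⟩
      show ((t+1 : ℕ) : ℝ) * (Δ₁ / 2)
          ≤ ∑ k ∈ Finset.Icc 1 (t+1), (f s (β.1 s) (X k ω) - μ s (β.1 s))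
      rw [hθ] at hs
      have hsum : ∑ k ∈ Finset.Icc 1 (t+1), (f s (β.1 s) (X k ω) - μ s (β.1 s))
          = (∑ k ∈ Finset.Icc 1 (t+1), f s (β.1 s) (X k ω))
            - ((t+1 : ℕ) : ℝ) * μ s (β.1 s) := by
        rw [Finset.sum_sub_distrib, Finset.sum_const, Nat.card_Icc]
        simp [nsmul_eq_mul]
      rw [hsum]
      have hmul := mul_le_mul_of_nonneg_left hs hnpos.le
      rw [mul_sub, mul_div_cancel₀ _ hnpos.ne'] at hmul
      linarith
    · -- deviation for βs
      have hcase2 : Δ₁/2 ≤ ρ βs μ - ρ βs (θ (t+1) ω) := by linarith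
      have heq : ρ βs μ - ρ βs (θ (t+1) ω)
          = ∑ s, βs.2 s * (μ s (βs.1 s) - θ (t+1) ω s (βs.1 s)) := by
        rw [hρ, hρ, ← Finset.sum_sub_distrib]
        exact Finset.sum_congr rfl fun s _ => (mul_sub _ _ _).symm
      rw [heq] at hcase2
      obtain ⟨s, hs⟩ := exists_ge_of_weighted_sum βs.2
        (fun s => μ s (βs.1 s) - θ (t+1) ω s (βs.1 s)) (hπ βs hβs).1 (hπ βs hβs).2 hcase2
      right
      refine Set.mem_iUnion.2 ⟨s, ?_⟩
      show ((t+1 : ℕ) : ℝ) * (Δ₁ / 2)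
          ≤ ∑ k ∈ Finset.Icc 1 (t+1), (μ s (βs.1 s) - f s (βs.1 s) (X k ω))
      rw [hθ] at hs
      have hsum : ∑ k ∈ Finset.Icc 1 (t+1), (μ s (βs.1 s) - f s (βs.1 s) (X k ω))
          = ((t+1 : ℕ) : ℝ) * μ s (βs.1 s)
            - (∑ k ∈ Finset.Icc 1 (t+1), f s (βs.1 s) (X k ω)) := by
        rw [Finset.sum_sub_distrib, Finset.sum_const, Nat.card_Icc]
        simp [nsmul_eq_mul]
      rw [hsum]
      have hmul := mul_le_mul_of_nonneg_left hs hnpos.le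
      rw [mul_sub, mul_div_cancel₀ _ hnpos.ne'] at hmul
      linarith
  -- per-slot probability bound
  set Ar : ℝ := (Fintype.card 𝒜 : ℝ) with hAr
  set Sr : ℝ := (Fintype.card 𝒮 : ℝ) with hSr
  set N : ℝ := (1 + Ar) * Sr with hN
  have hArn : 0 ≤ Ar := by rw [hAr]; positivity
  have hSrn : 0 ≤ Sr := by rw [hSr]; positivity
  have hNn : 0 ≤ N := by rw [hN]; positivity
  have hPrF : ∀ t : ℕ, Pr (F (t+1))
      ≤ ENNReal.ofReal (N * Real.exp (((t+1 : ℕ) : ℝ) * (-c))) := by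
    intro t
    set e : ℝ≥0∞ := ENNReal.ofReal (Real.exp (-(((t+1 : ℕ) : ℝ) * c))) with he
    have h1 : Pr (F (t+1)) ≤ Pr (⋃ s, ⋃ a, G (t+1) s a) + Pr (⋃ s, H (t+1) s) :=
      (measure_mono (hsub t)).trans (measure_union_le _ _)
    have h2 : Pr (⋃ s, ⋃ a, G (t+1) s a)
        ≤ ((Fintype.card 𝒮 * Fintype.card 𝒜 : ℕ) : ℝ≥0∞) * e := by
      calc Pr (⋃ s, ⋃ a, G (t+1) s a) ≤ ∑ s, Pr (⋃ a, G (t+1) s a) :=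
            measure_iUnion_fintype_le _ _
        _ ≤ ∑ _s : 𝒮, ∑ _a : 𝒜, e :=
            Finset.sum_le_sum fun s _ => (measure_iUnion_fintype_le _ _).trans
              (Finset.sum_le_sum fun a _ => keyG s a (t+1))
        _ = ((Fintype.card 𝒮 * Fintype.card 𝒜 : ℕ) : ℝ≥0∞) * e := by
            simp [Finset.sum_const, Finset.card_univ, mul_assoc]
    have h3 : Pr (⋃ s, H (t+1) s) ≤ ((Fintype.card 𝒮 : ℕ) : ℝ≥0∞) * e := by
      calc Pr (⋃ s, H (t+1) s) ≤ ∑ s, Pr (H (t+1) s) := measure_iUnion_fintype_le _ _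
        _ ≤ ∑ _s : 𝒮, e := Finset.sum_le_sum fun s _ => keyH s (t+1)
        _ = ((Fintype.card 𝒮 : ℕ) : ℝ≥0∞) * e := by
            simp [Finset.sum_const, Finset.card_univ]
    have h4 : ((Fintype.card 𝒮 * Fintype.card 𝒜 : ℕ) : ℝ≥0∞) * e
          + ((Fintype.card 𝒮 : ℕ) : ℝ≥0∞) * e
        = ENNReal.ofReal (N * Real.exp (((t+1 : ℕ) : ℝ) * (-c))) := by
      rw [he, ← ENNReal.ofReal_natCast (Fintype.card 𝒮 * Fintype.card 𝒜),
        ← ENNReal.ofReal_natCast (Fintype.card 𝒮),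
        ← ENNReal.ofReal_mul (by positivity), ← ENNReal.ofReal_mul (by positivity),
        ← ENNReal.ofReal_add (by positivity) (by positivity)]
      congr 1
      rw [hN, hAr, hSr]
      push_cast
      ring_nf
    calc Pr (F (t+1)) ≤ _ := h1
      _ ≤ _ := add_le_add h2 h3
      _ = _ := h4
  -- sum over time slots
  have hTmeas : Measurable (fun ω => ∑' t : ℕ, (F (t + 1)).indicator (fun _ => (1 : ℝ≥0∞)) ω) :=
    Measurable.ennreal_tsum fun t => measurable_const.indicator (hFmeas (t+1))
  have hTint : ∫⁻ ω, (∑' t : ℕ, (F (t + 1)).indicator (fun _ => (1 : ℝ≥0∞)) ω) ∂Pr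
      = ∑' t : ℕ, Pr (F (t+1)) := by
    rw [lintegral_tsum fun t => (measurable_const.indicator (hFmeas (t+1))).aemeasurable]
    congr 1
    funext t
    rw [lintegral_indicator_const (hFmeas (t+1)), one_mul]
  have hEc : 1 < Real.exp c := by
    rw [← Real.exp_zero]; exact Real.exp_lt_exp.2 hcpos
  have hgeom : ∑' t : ℕ, Pr (F (t+1)) ≤ ENNReal.ofReal (N / (Real.exp c - 1)) := by
    have hrlt : Real.exp (-c) < 1 := by
      rw [← Real.exp_zero]; exact Real.exp_lt_exp.2 (by linarith)
    have hr0 : (0:ℝ) < 1 - Real.exp (-c) := by linarith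
    set r : ℝ≥0∞ := ENNReal.ofReal (Real.exp (-c)) with hr
    calc ∑' t : ℕ, Pr (F (t+1))
        ≤ ∑' t : ℕ, ENNReal.ofReal (N * Real.exp (((t+1 : ℕ) : ℝ) * (-c))) :=
          ENNReal.tsum_le_tsum hPrF
      _ = ∑' t : ℕ, ENNReal.ofReal N * r ^ (t+1) := by
          congr 1
          funext t
          rw [Real.exp_nat_mul, ENNReal.ofReal_mul hNn,
            ENNReal.ofReal_pow (Real.exp_pos _).le]
      _ = ENNReal.ofReal N * (r * (1 - r)⁻¹) := by
          rw [ENNReal.tsum_mul_left, ENNReal.tsum_geometric_add_one]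
      _ = ENNReal.ofReal (N / (Real.exp c - 1)) := by
          have h1r : (1 : ℝ≥0∞) - r = ENNReal.ofReal (1 - Real.exp (-c)) := by
            rw [ENNReal.ofReal_sub _ (Real.exp_pos _).le, ENNReal.ofReal_one]
          rw [h1r, ← div_eq_mul_inv, ← ENNReal.ofReal_div_of_pos hr0,
            ← ENNReal.ofReal_mul hNn]
          congr 1
          rw [Real.exp_neg]
          have hE0 : Real.exp c ≠ 0 := (Real.exp_pos c).ne'
          have hE1 : Real.exp c - 1 ≠ 0 := by linarith
          field_simp
  -- final assembly
  have hint_total : ∫⁻ ω, (1 + ∑' t : ℕ, (F (t + 1)).indicator (fun _ => (1 : ℝ≥0∞)) ω) ∂Pr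
      = 1 + ∑' t : ℕ, Pr (F (t+1)) := by
    rw [lintegral_add_left measurable_const, hTint, lintegral_const, measure_univ, mul_one]
  constructor
  · calc ∫⁻ ω, (1 + ∑' t : ℕ, (F (t + 1)).indicator (fun _ => (1 : ℝ≥0∞)) ω) ∂Pr
        = 1 + ∑' t : ℕ, Pr (F (t+1)) := hint_total
      _ ≤ 1 + ENNReal.ofReal (N / (Real.exp c - 1)) := add_le_add_right hgeom 1
      _ = ENNReal.ofReal (1 + N / (Real.exp c - 1)) := by
          rw [ENNReal.ofReal_add (by norm_num) (div_nonneg hNn (by linarith)),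
            ENNReal.ofReal_one]
  · have hfin : ∫⁻ ω, (∑' t : ℕ, (F (t + 1)).indicator (fun _ => (1 : ℝ≥0∞)) ω) ∂Pr < ⊤ := by
      rw [hTint]
      exact lt_of_le_of_lt hgeom ENNReal.ofReal_lt_top
    exact ae_lt_top hTmeas hfin.ne
end

section
/- Define the convergence time Z = inf{ z ∈ ℕ, z ≥ 1 : for every t ≥ z the event F_t does not occur } (with Z = ∞ if no such z exists). Then 𝔼[Z] ≤ 1 + (1 + A) S e^{−c} / (1 − e^{−c})², where c = Δ₁²/(2B₀²). In particular, the expected convergence time of LPSM is finite. -/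
open MeasureTheory ProbabilityTheory

open scoped ENNReal

section LpsmAux

open Real

lemma lpsm_key_ineq (p h : ℝ) (hp0 : 0 ≤ p) (hp1 : p ≤ 1) :
    (1 - p) + p * exp h ≤ exp (p * h + h ^ 2 / 8) := by
  rcases eq_or_lt_of_le hp0 with rfl | hp
  · simpa using one_le_exp (by positivity)
  have hD : ∀ x : ℝ, 0 < 1 - p + p * exp x := by
    intro x
    have := exp_pos x
    nlinarith
  -- φ' as a function
  set ψ : ℝ → ℝ := fun x => p + x / 4 - p * exp x / (1 - p + p * exp x) with hψdef
  have hφ' : ∀ x, HasDerivAt (fun h => p * h + h ^ 2 / 8 - log (1 - p + p * exp h)) (ψ x) x := by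
    intro x
    have h1 : HasDerivAt (fun h : ℝ => p * h) p x := by
      simpa using (hasDerivAt_id x).const_mul p
    have h2 : HasDerivAt (fun h : ℝ => h ^ 2 / 8) (x / 4) x := by
      have := (hasDerivAt_pow 2 x).div_const 8
      exact this.congr_deriv (by norm_num; ring)
    have h3 : HasDerivAt (fun h : ℝ => 1 - p + p * exp h) (p * exp x) x :=
      ((Real.hasDerivAt_exp x).const_mul p).const_add (1 - p)
    have h4 : HasDerivAt (fun h : ℝ => log (1 - p + p * exp h))
        (p * exp x / (1 - p + p * exp x)) x := h3.log (hD x).ne'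
    exact (h1.add h2).sub h4
  have hψ' : ∀ x, HasDerivAt ψ (1 / 4 - p * exp x * (1 - p) / (1 - p + p * exp x) ^ 2) x := by
    intro x
    have h3 : HasDerivAt (fun h : ℝ => p * exp h) (p * exp x) x :=
      (Real.hasDerivAt_exp x).const_mul p
    have h3' : HasDerivAt (fun h : ℝ => 1 - p + p * exp h) (p * exp x) x :=
      h3.const_add (1 - p)
    have hq : HasDerivAt (fun h : ℝ => p * exp h / (1 - p + p * exp h))
        ((p * exp x * (1 - p + p * exp x) - p * exp x * (p * exp x)) / (1 - p + p * exp x) ^ 2)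
        x := h3.div h3' (hD x).ne'
    have h1 : HasDerivAt (fun h : ℝ => p + h / 4) (1 / 4) x := by
      simpa using ((hasDerivAt_id x).div_const 4).const_add p
    have := h1.sub hq
    refine this.congr_deriv ?_
    have := (hD x).ne'
    field_simp
    ring
  have hψmono : Monotone ψ := by
    apply monotone_of_deriv_nonneg
    · exact fun x => (hψ' x).differentiableAt
    · intro x
      rw [(hψ' x).deriv]
      have hDx := hD x
      have hex := exp_pos x
      have key : p * exp x * (1 - p) / (1 - p + p * exp x) ^ 2 ≤ 1 / 4 := by
        rw [div_le_iff₀ (by positivity)]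
        nlinarith [sq_nonneg (1 - p - p * exp x)]
      linarith
  have hψ0 : ψ 0 = 0 := by
    simp only [hψdef, exp_zero, mul_one]
    have : 1 - p + p = 1 := by ring
    rw [this]
    simp
  set φ : ℝ → ℝ := fun h => p * h + h ^ 2 / 8 - log (1 - p + p * exp h) with hφdef
  have hφcont : Continuous φ := by
    apply Continuous.sub
    · fun_prop
    · exact (continuous_const.add (continuous_const.mul Real.continuous_exp)).log
        fun x => (hD x).ne'
  have hφ0 : φ 0 = 0 := by
    simp only [hφdef, exp_zero, mul_one, mul_zero]
    have : 1 - p + p = 1 := by ring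
    rw [this]
    simp
  have hnonneg : ∀ x, 0 ≤ φ x := by
    intro x
    rcases le_total 0 x with hx | hx
    · have hmono : MonotoneOn φ (Set.Ici 0) := by
        apply monotoneOn_of_deriv_nonneg (convex_Ici 0) hφcont.continuousOn
        · exact fun y _ => (hφ' y).differentiableAt.differentiableWithinAt
        · intro y hy
          rw [(hφ' y).deriv]
          rw [interior_Ici] at hy
          calc (0:ℝ) = ψ 0 := hψ0.symm
          _ ≤ ψ y := hψmono (le_of_lt hy)
      have := hmono (Set.self_mem_Ici) (Set.mem_Ici.mpr hx) hx
      rwa [hφ0] at this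
    · have hanti : AntitoneOn φ (Set.Iic 0) := by
        apply antitoneOn_of_deriv_nonpos (convex_Iic 0) hφcont.continuousOn
        · exact fun y _ => (hφ' y).differentiableAt.differentiableWithinAt
        · intro y hy
          rw [(hφ' y).deriv]
          rw [interior_Iic] at hy
          calc ψ y ≤ ψ 0 := hψmono (le_of_lt hy)
          _ = 0 := hψ0
      have := hanti (Set.mem_Iic.mpr hx) (Set.self_mem_Iic) hx
      rwa [hφ0] at this
  have hlog : log (1 - p + p * exp h) ≤ p * h + h ^ 2 / 8 := by
    have := hnonneg h
    simp only [hφdef] at this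
    linarith
  calc (1 - p) + p * exp h = exp (log (1 - p + p * exp h)) := (exp_log (hD h)).symm
  _ ≤ exp (p * h + h ^ 2 / 8) := exp_le_exp.mpr hlog

lemma lpsm_mgf_le {Ω : Type*} [MeasurableSpace Ω] (Pr : Measure Ω) [IsProbabilityMeasure Pr]
    (Y : Ω → ℝ) (hY : Measurable Y) (a b : ℝ) (hab : ∀ ω, Y ω ∈ Set.Icc a b) (lam : ℝ) :
    ∫ ω, exp (lam * (Y ω - ∫ ω', Y ω' ∂Pr)) ∂Pr ≤ exp (lam ^ 2 * (b - a) ^ 2 / 8) := by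
  have hΩ : Nonempty Ω := by
    by_contra hne
    rw [not_nonempty_iff] at hne
    have : Pr Set.univ = 1 := measure_univ
    simp [Set.univ_eq_empty_iff.mpr hne] at this
  obtain ⟨ω₀⟩ := hΩ
  have hab' : a ≤ b := le_trans (hab ω₀).1 (hab ω₀).2
  have hYint : Integrable Y Pr := by
    refine Integrable.mono' (integrable_const (max |a| |b|)) hY.aestronglyMeasurable ?_
    filter_upwards with ω
    rcases hab ω with ⟨h1, h2⟩
    rw [Real.norm_eq_abs, abs_le]
    constructor
    · calc -(max |a| |b|) ≤ -|a| := by simp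
      _ ≤ a := neg_abs_le a
      _ ≤ Y ω := h1
    · calc Y ω ≤ b := h2
      _ ≤ |b| := le_abs_self b
      _ ≤ max |a| |b| := le_max_right _ _
  set m := ∫ ω', Y ω' ∂Pr with hm
  have hma : a ≤ m := by
    have := integral_mono (integrable_const a) hYint (fun ω => (hab ω).1)
    simpa using this
  have hmb : m ≤ b := by
    have := integral_mono hYint (integrable_const b) (fun ω => (hab ω).2)
    simpa using this
  rcases eq_or_lt_of_le hab' with rfl | hlt
  · have hYconst : ∀ ω, Y ω = a := fun ω => le_antisymm (hab ω).2 (hab ω).1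
    have hmc : m = a := le_antisymm hmb hma
    simp only [hYconst, hmc, sub_self, mul_zero, exp_zero, integral_const, measure_univ,
      ENNReal.toReal_one, smul_eq_mul, one_mul]
    simp
  -- exp is convex: pointwise bound exp (lam * Y ω) ≤ c₁ + c₂ * Y ω
  have hba : (0:ℝ) < b - a := by linarith
  set c₂ := (exp (lam * b) - exp (lam * a)) / (b - a) with hc₂
  set c₁ := (b * exp (lam * a) - a * exp (lam * b)) / (b - a) with hc₁
  have hpt : ∀ ω, exp (lam * Y ω) ≤ c₁ + c₂ * Y ω := by
    intro ω
    rcases hab ω with ⟨h1, h2⟩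
    set y := Y ω
    have hu : 0 ≤ (b - y) / (b - a) := div_nonneg (by linarith) hba.le
    have hv : 0 ≤ (y - a) / (b - a) := div_nonneg (by linarith) hba.le
    have huv : (b - y) / (b - a) + (y - a) / (b - a) = 1 := by field_simp; ring
    have hcomb := convexOn_exp.2 (Set.mem_univ (lam * a)) (Set.mem_univ (lam * b)) hu hv huv
    simp only [smul_eq_mul] at hcomb
    have harg : (b - y) / (b - a) * (lam * a) + (y - a) / (b - a) * (lam * b) = lam * y := by
      field_simp
      ring
    rw [harg] at hcomb
    calc exp (lam * y) ≤ (b - y) / (b - a) * exp (lam * a) + (y - a) / (b - a) * exp (lam * b) :=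
          hcomb
    _ = c₁ + c₂ * y := by
        simp only [hc₁, hc₂]
        field_simp
        ring
  have hexpint : Integrable (fun ω => exp (lam * Y ω)) Pr := by
    refine Integrable.mono' (integrable_const (exp (max (lam * a) (lam * b))))
      ((hY.const_mul lam).exp).aestronglyMeasurable ?_
    filter_upwards with ω
    rw [Real.norm_eq_abs, abs_of_pos (exp_pos _)]
    apply exp_le_exp.mpr
    rcases le_total 0 lam with hl | hl
    · exact le_max_of_le_right (mul_le_mul_of_nonneg_left (hab ω).2 hl)
    · exact le_max_of_le_left (mul_le_mul_of_nonpos_left (hab ω).1 hl)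
  have hint_le : ∫ ω, exp (lam * Y ω) ∂Pr ≤ c₁ + c₂ * m := by
    have h1 : ∫ ω, exp (lam * Y ω) ∂Pr ≤ ∫ ω, (c₁ + c₂ * Y ω) ∂Pr :=
      integral_mono hexpint ((integrable_const c₁).add (hYint.const_mul c₂)) hpt
    have h2 : ∫ ω, (c₁ + c₂ * Y ω) ∂Pr = c₁ + c₂ * m := by
      rw [integral_add (integrable_const c₁) (hYint.const_mul c₂), integral_const,
        integral_const_mul]
      simp [hm]
    linarith
  -- apply key inequality with p = (m-a)/(b-a), h = lam*(b-a)
  set p := (m - a) / (b - a) with hp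
  have hp0 : 0 ≤ p := div_nonneg (by linarith) hba.le
  have hp1 : p ≤ 1 := by rw [div_le_one hba]; linarith
  have hkey := lpsm_key_ineq p (lam * (b - a)) hp0 hp1
  have heab : exp (lam * a) * exp (lam * (b - a)) = exp (lam * b) := by
    rw [← exp_add]; congr 1; ring
  have hceq : c₁ + c₂ * m = exp (lam * a) * ((1 - p) + p * exp (lam * (b - a))) := by
    simp only [hc₁, hc₂, hp]
    rw [← heab]
    field_simp
    ring
  have hfinal : c₁ + c₂ * m ≤ exp (lam * m + lam ^ 2 * (b - a) ^ 2 / 8) := by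
    rw [hceq]
    calc exp (lam * a) * ((1 - p) + p * exp (lam * (b - a)))
        ≤ exp (lam * a) * exp (p * (lam * (b - a)) + (lam * (b - a)) ^ 2 / 8) := by
          apply mul_le_mul_of_nonneg_left hkey (exp_pos _).le
    _ = exp (lam * m + lam ^ 2 * (b - a) ^ 2 / 8) := by
        rw [← exp_add]
        congr 1
        have hph : p * (lam * (b - a)) = lam * (m - a) := by
          rw [hp]; field_simp
        rw [hph]; ring
  calc ∫ ω, exp (lam * (Y ω - m)) ∂Pr = ∫ ω, exp (-(lam * m)) * exp (lam * Y ω) ∂Pr := by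
        congr 1; funext ω; rw [← exp_add]; congr 1; ring
  _ = exp (-(lam * m)) * ∫ ω, exp (lam * Y ω) ∂Pr := integral_const_mul _ _
  _ ≤ exp (-(lam * m)) * (c₁ + c₂ * m) := by
      apply mul_le_mul_of_nonneg_left hint_le (exp_pos _).le
  _ ≤ exp (-(lam * m)) * exp (lam * m + lam ^ 2 * (b - a) ^ 2 / 8) := by
      apply mul_le_mul_of_nonneg_left hfinal (exp_pos _).le
  _ = exp (lam ^ 2 * (b - a) ^ 2 / 8) := by rw [← exp_add]; congr 1; ring

lemma lpsm_tail {Ω 𝒳 : Type*} [MeasurableSpace Ω] [MeasurableSpace 𝒳]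
    (Pr : Measure Ω) [IsProbabilityMeasure Pr]
    (X : ℕ → Ω → 𝒳) (hXmeas : ∀ k, Measurable (X k))
    (hindep : iIndepFun X Pr)
    (hident : ∀ k, 1 ≤ k → IdentDistrib (X k) (X 1) Pr Pr)
    (g : 𝒳 → ℝ) (hg : Measurable g) (B₀ : ℝ) (hB₀ : 0 < B₀)
    (hbd : ∀ x y, |g x - g y| ≤ B₀) (ε : ℝ) (hε : 0 < ε) (t : ℕ) (ht : 1 ≤ t) :
    Pr {ω | (∫ ω', g (X 1 ω') ∂Pr) + ε ≤ (∑ k ∈ Finset.Icc 1 t, g (X k ω)) / t} ≤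
      ENNReal.ofReal (exp (-(2 * t * ε ^ 2 / B₀ ^ 2))) := by
  have hΩ : Nonempty Ω := by
    by_contra hne
    rw [not_nonempty_iff] at hne
    have : Pr Set.univ = 1 := measure_univ
    simp [Set.univ_eq_empty_iff.mpr hne] at this
  obtain ⟨ω₀⟩ := hΩ
  set x₀ := X 1 ω₀ with hx₀
  have hbdd : BddBelow (Set.range g) := by
    refine ⟨g x₀ - B₀, ?_⟩
    rintro _ ⟨x, rfl⟩
    have := hbd x₀ x
    rw [abs_le] at this
    linarith [this.1]
  set a := sInf (Set.range g) with ha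
  have ha_le : ∀ x, a ≤ g x := fun x => csInf_le hbdd ⟨x, rfl⟩
  have hle_b : ∀ x, g x ≤ a + B₀ := by
    intro x
    have : g x - B₀ ≤ a := by
      apply le_csInf (⟨g x₀, x₀, rfl⟩ : (Set.range g).Nonempty)
      rintro _ ⟨y, rfl⟩
      have := hbd x y
      rw [abs_le] at this
      linarith [this.1]
    linarith
  set m := ∫ ω', g (X 1 ω') ∂Pr with hm
  set Y : ℕ → Ω → ℝ := fun k ω => g (X k ω) - m with hY
  have hYmeas : ∀ k, Measurable (Y k) := fun k => (hg.comp (hXmeas k)).sub measurable_const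
  set S : Ω → ℝ := fun ω => ∑ k ∈ Finset.Icc 1 t, Y k ω with hS
  have htpos : (0:ℝ) < t := by exact_mod_cast ht
  -- event inclusion
  have hsub : {ω | m + ε ≤ (∑ k ∈ Finset.Icc 1 t, g (X k ω)) / t} ⊆ {ω | t * ε ≤ S ω} := by
    intro ω hω
    simp only [Set.mem_setOf_eq] at hω ⊢
    rw [le_div_iff₀ htpos] at hω
    have hcard : (Finset.Icc 1 t).card = t := by
      rw [Nat.card_Icc]; omega
    have : S ω = (∑ k ∈ Finset.Icc 1 t, g (X k ω)) - t * m := by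
      simp only [hS, hY, Finset.sum_sub_distrib, Finset.sum_const, hcard, nsmul_eq_mul]
      try ring
    rw [this]
    nlinarith
  set lam := 4 * ε / B₀ ^ 2 with hlam
  have hlam0 : 0 ≤ lam := by positivity
  -- integrability of exponentials
  have hexpint : ∀ (c : ℝ) (k : ℕ), Integrable (fun ω => exp (c * Y k ω)) Pr := by
    intro c k
    refine Integrable.mono' (integrable_const (exp (|c| * (|a| + B₀ + |m|))))
      (((hYmeas k).const_mul c).exp).aestronglyMeasurable ?_
    filter_upwards with ω
    rw [Real.norm_eq_abs, abs_of_pos (exp_pos _)]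
    apply exp_le_exp.mpr
    simp only [hY]
    have h2 := ha_le (X k ω)
    have h3 := hle_b (X k ω)
    have h4 := le_abs_self a
    have h5 := neg_abs_le a
    have h6 := le_abs_self m
    have h7 := neg_abs_le m
    calc c * (g (X k ω) - m) ≤ |c| * |g (X k ω) - m| := by
          rw [← abs_mul]; exact le_abs_self _
    _ ≤ |c| * (|a| + B₀ + |m|) := by
        apply mul_le_mul_of_nonneg_left _ (abs_nonneg c)
        rw [abs_le]
        constructor <;> linarith
  -- independence of the Y's
  have hYindep : iIndepFun Y Pr := by
    exact hindep.comp (fun _ => fun x => g x - m) (fun _ => hg.sub measurable_const)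
  have hSfun : S = ∑ k ∈ Finset.Icc 1 t, Y k := by
    funext ω
    simp [hS, Finset.sum_apply]
  have hSint : Integrable (fun ω => exp (lam * S ω)) Pr := by
    refine Integrable.mono' (integrable_const (exp (t * (|lam| * (|a| + B₀ + |m|)))))
      ((((Finset.measurable_sum _ (fun k _ => hYmeas k)).const_mul lam)).exp).aestronglyMeasurable ?_
    filter_upwards with ω
    rw [Real.norm_eq_abs, abs_of_pos (exp_pos _)]
    apply exp_le_exp.mpr
    have hterm : ∀ k, lam * Y k ω ≤ |lam| * (|a| + B₀ + |m|) := by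
      intro k
      have h2 := ha_le (X k ω)
      have h3 := hle_b (X k ω)
      have h4 := le_abs_self a
      have h5 := neg_abs_le a
      have h6 := le_abs_self m
      have h7 := neg_abs_le m
      calc lam * Y k ω ≤ |lam| * |Y k ω| := by rw [← abs_mul]; exact le_abs_self _
      _ ≤ |lam| * (|a| + B₀ + |m|) := by
          apply mul_le_mul_of_nonneg_left _ (abs_nonneg lam)
          rw [abs_le]
          constructor <;> simp only [hY] <;> linarith
    calc lam * S ω = ∑ k ∈ Finset.Icc 1 t, lam * Y k ω := by
          rw [hS, Finset.mul_sum]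
    _ ≤ ∑ k ∈ Finset.Icc 1 t, |lam| * (|a| + B₀ + |m|) :=
        Finset.sum_le_sum fun k _ => hterm k
    _ = t * (|lam| * (|a| + B₀ + |m|)) := by
        rw [Finset.sum_const, Nat.card_Icc, nsmul_eq_mul]
        norm_num
  -- Chernoff bound
  have hchern : (Pr {ω | t * ε ≤ S ω}).toReal ≤ exp (-lam * (t * ε)) * mgf S Pr lam :=
    measure_ge_le_exp_mul_mgf (t * ε) hlam0 hSint
  -- mgf of the sum is a product
  have hmgfS : mgf S Pr lam = ∏ k ∈ Finset.Icc 1 t, mgf (Y k) Pr lam := by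
    rw [hSfun]
    exact hYindep.mgf_sum hYmeas _
  -- each factor equals the first, which Hoeffding bounds
  have hmgf1 : mgf (Y 1) Pr lam ≤ exp (lam ^ 2 * B₀ ^ 2 / 8) := by
    have := lpsm_mgf_le Pr (fun ω => g (X 1 ω)) (hg.comp (hXmeas 1)) a (a + B₀)
      (fun ω => ⟨ha_le _, hle_b _⟩) lam
    have hBB : a + B₀ - a = B₀ := by ring
    rw [hBB] at this
    exact this
  have hmgfk : ∀ k ∈ Finset.Icc 1 t, mgf (Y k) Pr lam = mgf (Y 1) Pr lam := by
    intro k hk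
    have hk1 : 1 ≤ k := (Finset.mem_Icc.mp hk).1
    have hid : IdentDistrib (fun ω => exp (lam * Y k ω)) (fun ω => exp (lam * Y 1 ω)) Pr Pr := by
      have h1 : IdentDistrib (Y k) (Y 1) Pr Pr :=
        (hident k hk1).comp (hg.sub measurable_const)
      exact h1.comp (measurable_const_mul lam).exp
    exact hid.integral_eq
  have hprod : mgf S Pr lam ≤ exp (lam ^ 2 * B₀ ^ 2 / 8) ^ t := by
    rw [hmgfS, Finset.prod_congr rfl hmgfk, Finset.prod_const, Nat.card_Icc]
    have hct : t + 1 - 1 = t := by omega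
    rw [hct]
    exact pow_le_pow_left₀ mgf_nonneg hmgf1 t
  have hfin : (Pr {ω | t * ε ≤ S ω}).toReal ≤ exp (-(2 * t * ε ^ 2 / B₀ ^ 2)) := by
    calc (Pr {ω | t * ε ≤ S ω}).toReal ≤ exp (-lam * (t * ε)) * mgf S Pr lam := hchern
    _ ≤ exp (-lam * (t * ε)) * exp (lam ^ 2 * B₀ ^ 2 / 8) ^ t := by
        apply mul_le_mul_of_nonneg_left hprod (exp_pos _).le
    _ = exp (-lam * (t * ε) + t * (lam ^ 2 * B₀ ^ 2 / 8)) := by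
        rw [← Real.exp_nat_mul, ← exp_add]
    _ = exp (-(2 * t * ε ^ 2 / B₀ ^ 2)) := by
        congr 1
        rw [hlam]
        field_simp
        ring
  calc Pr {ω | m + ε ≤ (∑ k ∈ Finset.Icc 1 t, g (X k ω)) / t} ≤ Pr {ω | t * ε ≤ S ω} :=
        measure_mono hsub
  _ ≤ ENNReal.ofReal (exp (-(2 * t * ε ^ 2 / B₀ ^ 2))) :=
      (ENNReal.le_ofReal_iff_toReal_le (measure_ne_top _ _) (exp_pos _).le).mpr hfin

lemma lpsm_Z_le {Ω : Type*} (F : ℕ → Set Ω) (ω : Ω) :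
    sInf {z : ℝ≥0∞ | ∃ n : ℕ, z = (n : ℝ≥0∞) ∧ 1 ≤ n ∧ ∀ t, n ≤ t → ω ∉ F t} ≤
      1 + ∑' t : ℕ, (F t).indicator (fun _ => (t : ℝ≥0∞)) ω := by
  set G := ∑' t : ℕ, (F t).indicator (fun _ => (t : ℝ≥0∞)) ω with hG
  by_cases hGtop : G = ⊤
  · rw [hGtop]
    simp
  set T := {t : ℕ | 1 ≤ t ∧ ω ∈ F t} with hT
  have hmem : ∀ t ∈ T, (t : ℝ≥0∞) ≤ G := by
    intro t ht
    have h := ENNReal.le_tsum (f := fun t => (F t).indicator (fun _ => (t : ℝ≥0∞)) ω) t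
    rwa [Set.indicator_of_mem ht.2] at h
  have hbdd : BddAbove T := by
    refine ⟨⌈G.toReal⌉₊, fun t ht => ?_⟩
    have h1 : (t : ℝ) ≤ G.toReal := by
      have h2 := ENNReal.toReal_mono hGtop (hmem t ht)
      simpa using h2
    exact_mod_cast h1.trans (Nat.le_ceil _)
  rcases Set.eq_empty_or_nonempty T with hTe | hTne
  · have h1 : sInf {z : ℝ≥0∞ | ∃ n : ℕ, z = (n : ℝ≥0∞) ∧ 1 ≤ n ∧ ∀ t, n ≤ t → ω ∉ F t} ≤
        ((1 : ℕ) : ℝ≥0∞) := by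
      apply sInf_le
      refine ⟨1, rfl, le_refl 1, fun u hu huF => ?_⟩
      have : u ∈ T := ⟨hu, huF⟩
      rw [hTe] at this
      exact this
    calc sInf _ ≤ ((1 : ℕ) : ℝ≥0∞) := h1
    _ = 1 := by norm_num
    _ ≤ 1 + G := le_self_add
  · set N := sSup T with hN
    have hNmem : N ∈ T := Nat.sSup_mem hTne hbdd
    have h1 : sInf {z : ℝ≥0∞ | ∃ n : ℕ, z = (n : ℝ≥0∞) ∧ 1 ≤ n ∧ ∀ t, n ≤ t → ω ∉ F t} ≤
        ((N + 1 : ℕ) : ℝ≥0∞) := by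
      apply sInf_le
      refine ⟨N + 1, rfl, by omega, fun u hu huF => ?_⟩
      have huT : u ∈ T := ⟨by omega, huF⟩
      have := le_csSup hbdd huT
      omega
    calc sInf _ ≤ ((N + 1 : ℕ) : ℝ≥0∞) := h1
    _ = (N : ℝ≥0∞) + 1 := by push_cast; ring
    _ ≤ G + 1 := add_le_add_left (hmem N hNmem) 1
    _ = 1 + G := add_comm _ _

end LpsmAux

/-- The convergence time `Z` of LPSM — the first slot from which onward no failure
event occurs — has finite expectation, bounded by
`1 + (1 + A) S e^{−c} / (1 − e^{−c})²` with `c = Δ₁²/(2B₀²)`. -/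
theorem lpsm_convergence_time_finite
    {Ω : Type*} [MeasurableSpace Ω] (Pr : Measure Ω) [IsProbabilityMeasure Pr]
    {𝒳 : Type*} [MeasurableSpace 𝒳]
    (X : ℕ → Ω → 𝒳) (hXmeas : ∀ k, Measurable (X k))
    (hindep : iIndepFun X Pr)
    (hident : ∀ k, 1 ≤ k → IdentDistrib (X k) (X 1) Pr Pr)
    {𝒮 𝒜 : Type*} [Fintype 𝒮] [Fintype 𝒜] [Nonempty 𝒮] [Nonempty 𝒜]
    (f : 𝒮 → 𝒜 → 𝒳 → ℝ) (hfmeas : ∀ s a, Measurable (f s a))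
    (B₀ : ℝ) (hB₀ : 0 < B₀)
    (hbd : ∀ s a x y, |f s a x - f s a y| ≤ B₀)
    (μ : 𝒮 → 𝒜 → ℝ) (hμ : ∀ s a, μ s a = ∫ ω, f s a (X 1 ω) ∂Pr)
    (θ : ℕ → Ω → 𝒮 → 𝒜 → ℝ)
    (hθ : ∀ t ω s a, θ t ω s a = (∑ k ∈ Finset.Icc 1 t, f s a (X k ω)) / t)
    (𝓑 : Finset ((𝒮 → 𝒜) × (𝒮 → ℝ)))
    (hπ : ∀ β ∈ 𝓑, (∀ s, 0 ≤ β.2 s) ∧ ∑ s, β.2 s = 1)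
    (ρ : ((𝒮 → 𝒜) × (𝒮 → ℝ)) → (𝒮 → 𝒜 → ℝ) → ℝ)
    (hρ : ∀ β Θ, ρ β Θ = ∑ s, β.2 s * Θ s (β.1 s))
    (βs : (𝒮 → 𝒜) × (𝒮 → ℝ)) (hβs : βs ∈ 𝓑)
    (Δ₁ : ℝ) (hΔ₁ : 0 < Δ₁)
    (hgap : ∀ β ∈ 𝓑, β ≠ βs → ρ β μ + Δ₁ ≤ ρ βs μ)
    (F : ℕ → Set Ω)
    (hF : ∀ t, F t = {ω | ∃ β ∈ 𝓑, β ≠ βs ∧ ρ βs (θ t ω) ≤ ρ β (θ t ω)})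
    (Z : Ω → ℝ≥0∞)
    (hZ : ∀ ω, Z ω = sInf {z : ℝ≥0∞ |
      ∃ n : ℕ, z = (n : ℝ≥0∞) ∧ 1 ≤ n ∧ ∀ t, n ≤ t → ω ∉ F t}) :
    ∫⁻ ω, Z ω ∂Pr ≤ ENNReal.ofReal (1 +
      (1 + (Fintype.card 𝒜 : ℝ)) * (Fintype.card 𝒮 : ℝ) *
        Real.exp (-(Δ₁ ^ 2 / (2 * B₀ ^ 2))) /
        (1 - Real.exp (-(Δ₁ ^ 2 / (2 * B₀ ^ 2)))) ^ 2) := by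
  classical
  set x := Real.exp (-(Δ₁ ^ 2 / (2 * B₀ ^ 2))) with hxdef
  have hx0 : 0 < x := Real.exp_pos _
  have hx1 : x < 1 := by
    rw [hxdef, Real.exp_lt_one_iff]
    have : (0:ℝ) < Δ₁ ^ 2 / (2 * B₀ ^ 2) := by positivity
    linarith
  set K := (1 + (Fintype.card 𝒜 : ℝ)) * (Fintype.card 𝒮 : ℝ) with hKdef
  have hK0 : 0 ≤ K := by positivity
  -- measurability
  have hθmeas : ∀ t s a, Measurable (fun ω => θ t ω s a) := by
    intro t s a
    simp only [hθ]
    exact (Finset.measurable_sum _ fun k _ => (hfmeas s a).comp (hXmeas k)).div_const _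
  have hρmeas : ∀ β t, Measurable (fun ω => ρ β (θ t ω)) := by
    intro β t
    simp only [hρ]
    exact Finset.measurable_sum _ fun s _ => (hθmeas t s (β.1 s)).const_mul (β.2 s)
  have hFmeas : ∀ t, MeasurableSet (F t) := by
    intro t
    rw [hF]
    have heq : {ω | ∃ β ∈ 𝓑, β ≠ βs ∧ ρ βs (θ t ω) ≤ ρ β (θ t ω)} =
        ⋃ β ∈ (𝓑 : Set _), ({ω | β ≠ βs} ∩ {ω | ρ βs (θ t ω) ≤ ρ β (θ t ω)}) := by
      ext ω
      simp only [Set.mem_setOf_eq, Set.mem_iUnion, Set.mem_inter_iff, Finset.mem_coe]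
      tauto
    rw [heq]
    exact MeasurableSet.biUnion 𝓑.countable_toSet fun β _ =>
      (MeasurableSet.const _).inter (measurableSet_le (hρmeas βs t) (hρmeas β t))
  -- bad events
  set Aev : ℕ → 𝒮 → Set Ω :=
    fun t s => {ω | θ t ω s (βs.1 s) ≤ μ s (βs.1 s) - Δ₁ / 2} with hAev
  set Bev : ℕ → 𝒮 × 𝒜 → Set Ω :=
    fun t p => {ω | μ p.1 p.2 + Δ₁ / 2 ≤ θ t ω p.1 p.2} with hBev
  have hinc : ∀ t, F t ⊆ (⋃ s ∈ (Finset.univ : Finset 𝒮), Aev t s) ∪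
      ⋃ p ∈ (Finset.univ : Finset (𝒮 × 𝒜)), Bev t p := by
    intro t ω hω
    by_contra hnot
    simp only [Set.mem_union, Set.mem_iUnion, not_or, not_exists] at hnot
    obtain ⟨hA, hB⟩ := hnot
    have hA' : ∀ s : 𝒮, μ s (βs.1 s) - Δ₁ / 2 < θ t ω s (βs.1 s) := by
      intro s
      have := hA s (Finset.mem_univ s)
      simpa [hAev, not_le] using this
    have hB' : ∀ (s : 𝒮) (a : 𝒜), θ t ω s a < μ s a + Δ₁ / 2 := by
      intro s a
      have := hB (s, a) (Finset.mem_univ _)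
      simpa [hBev, not_le] using this
    rw [hF] at hω
    obtain ⟨β, hβ𝓑, hβne, hβle⟩ := hω
    obtain ⟨hπβ0, hπβ1⟩ := hπ β hβ𝓑
    obtain ⟨hπs0, hπs1⟩ := hπ βs hβs
    have h1 : ρ βs μ - Δ₁ / 2 ≤ ρ βs (θ t ω) := by
      rw [hρ, hρ]
      have hsum := Finset.sum_le_sum (s := (Finset.univ : Finset 𝒮))
        (f := fun s => βs.2 s * (μ s (βs.1 s) - Δ₁ / 2))
        (g := fun s => βs.2 s * θ t ω s (βs.1 s))
        (fun s _ => mul_le_mul_of_nonneg_left (hA' s).le (hπs0 s))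
      simp only [mul_sub] at hsum
      rw [Finset.sum_sub_distrib, ← Finset.sum_mul, hπs1, one_mul] at hsum
      linarith
    have h2 : ρ β (θ t ω) < ρ β μ + Δ₁ / 2 := by
      rw [hρ, hρ]
      have hex : ∃ s ∈ (Finset.univ : Finset 𝒮), (0:ℝ) < β.2 s := by
        apply Finset.exists_lt_of_sum_lt
        rw [hπβ1, Finset.sum_const_zero]
        norm_num
      obtain ⟨s₀, hs₀mem, hs₀⟩ := hex
      have hsum : ∑ s, β.2 s * θ t ω s (β.1 s) < ∑ s, β.2 s * (μ s (β.1 s) + Δ₁ / 2) := by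
        apply Finset.sum_lt_sum
        · exact fun s _ => mul_le_mul_of_nonneg_left (hB' s (β.1 s)).le (hπβ0 s)
        · exact ⟨s₀, hs₀mem, mul_lt_mul_of_pos_left (hB' s₀ (β.1 s₀)) hs₀⟩
      simp only [mul_add] at hsum
      rw [Finset.sum_add_distrib, ← Finset.sum_mul, hπβ1, one_mul] at hsum
      linarith
    have h3 := hgap β hβ𝓑 hβne
    linarith
  -- per-t tail bound
  have hAbound : ∀ (t : ℕ), 1 ≤ t → ∀ s : 𝒮, Pr (Aev t s) ≤ ENNReal.ofReal (x ^ t) := by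
    intro t ht s
    set a' := βs.1 s with ha'
    have htail := lpsm_tail Pr X hXmeas hindep hident (fun y => -(f s a' y))
      (hfmeas s a').neg B₀ hB₀
      (fun u v => by
        show |(-(f s a' u)) - (-(f s a' v))| ≤ B₀
        rw [show (-(f s a' u)) - (-(f s a' v)) = -(f s a' u - f s a' v) by ring, abs_neg]
        exact hbd s a' u v)
      (Δ₁ / 2) (by positivity) t ht
    have hxpow : ENNReal.ofReal (Real.exp (-(2 * t * (Δ₁ / 2) ^ 2 / B₀ ^ 2))) =
        ENNReal.ofReal (x ^ t) := by
      congr 1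
      rw [hxdef, ← Real.exp_nat_mul]
      congr 1
      field_simp
    rw [hxpow] at htail
    refine le_trans (measure_mono ?_) htail
    intro ω hω
    simp only [hAev, Set.mem_setOf_eq] at hω ⊢
    have hint : ∫ ω', -f s a' (X 1 ω') ∂Pr = -μ s a' := by
      rw [hμ, integral_neg]
    have hsum : (∑ k ∈ Finset.Icc 1 t, -f s a' (X k ω)) / t =
        -((∑ k ∈ Finset.Icc 1 t, f s a' (X k ω)) / t) := by
      rw [Finset.sum_neg_distrib, neg_div]
    rw [hint, hsum, ← hθ]
    linarith
  have hBbound : ∀ (t : ℕ), 1 ≤ t → ∀ p : 𝒮 × 𝒜, Pr (Bev t p) ≤ ENNReal.ofReal (x ^ t) := by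
    intro t ht p
    have htail := lpsm_tail Pr X hXmeas hindep hident (f p.1 p.2)
      (hfmeas p.1 p.2) B₀ hB₀ (hbd p.1 p.2) (Δ₁ / 2) (by positivity) t ht
    have hxpow : ENNReal.ofReal (Real.exp (-(2 * t * (Δ₁ / 2) ^ 2 / B₀ ^ 2))) =
        ENNReal.ofReal (x ^ t) := by
      congr 1
      rw [hxdef, ← Real.exp_nat_mul]
      congr 1
      field_simp
    rw [hxpow] at htail
    refine le_trans (measure_mono ?_) htail
    intro ω hω
    simp only [hBev, Set.mem_setOf_eq] at hω ⊢
    rw [← hμ, ← hθ]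
    exact hω
  have hPF : ∀ (t : ℕ), 1 ≤ t → Pr (F t) ≤ ENNReal.ofReal (K * x ^ t) := by
    intro t ht
    calc Pr (F t) ≤ Pr ((⋃ s ∈ (Finset.univ : Finset 𝒮), Aev t s) ∪
          ⋃ p ∈ (Finset.univ : Finset (𝒮 × 𝒜)), Bev t p) := measure_mono (hinc t)
    _ ≤ Pr (⋃ s ∈ (Finset.univ : Finset 𝒮), Aev t s) +
          Pr (⋃ p ∈ (Finset.univ : Finset (𝒮 × 𝒜)), Bev t p) := measure_union_le _ _
    _ ≤ (∑ s ∈ (Finset.univ : Finset 𝒮), Pr (Aev t s)) +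
          ∑ p ∈ (Finset.univ : Finset (𝒮 × 𝒜)), Pr (Bev t p) :=
        add_le_add (measure_biUnion_finset_le _ _) (measure_biUnion_finset_le _ _)
    _ ≤ (∑ _s ∈ (Finset.univ : Finset 𝒮), ENNReal.ofReal (x ^ t)) +
          ∑ _p ∈ (Finset.univ : Finset (𝒮 × 𝒜)), ENNReal.ofReal (x ^ t) :=
        add_le_add (Finset.sum_le_sum fun s _ => hAbound t ht s)
          (Finset.sum_le_sum fun p _ => hBbound t ht p)
    _ = ENNReal.ofReal (K * x ^ t) := by
        rw [Finset.sum_const, Finset.sum_const, Finset.card_univ, Finset.card_univ,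
          Fintype.card_prod, nsmul_eq_mul, nsmul_eq_mul]
        rw [show ((Fintype.card 𝒮 : ℝ≥0∞)) = ENNReal.ofReal ((Fintype.card 𝒮 : ℝ)) from
          (ENNReal.ofReal_natCast _).symm]
        rw [show (((Fintype.card 𝒮 * Fintype.card 𝒜 : ℕ) : ℝ≥0∞)) =
            ENNReal.ofReal (((Fintype.card 𝒮 * Fintype.card 𝒜 : ℕ) : ℝ)) from
          (ENNReal.ofReal_natCast _).symm]
        rw [← ENNReal.ofReal_mul (by positivity), ← ENNReal.ofReal_mul (by positivity),
          ← ENNReal.ofReal_add (by positivity) (by positivity)]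
        congr 1
        rw [hKdef]
        push_cast
        ring
  -- bound Z pointwise and integrate
  set G : Ω → ℝ≥0∞ := fun ω => ∑' t : ℕ, (F t).indicator (fun _ => (t : ℝ≥0∞)) ω with hGdef
  have hZG : ∀ ω, Z ω ≤ 1 + G ω := by
    intro ω
    rw [hZ]
    exact lpsm_Z_le F ω
  have hstep1 : ∫⁻ ω, Z ω ∂Pr ≤ 1 + ∑' t : ℕ, (t : ℝ≥0∞) * Pr (F t) := by
    calc ∫⁻ ω, Z ω ∂Pr ≤ ∫⁻ ω, (1 + G ω) ∂Pr := lintegral_mono hZG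
    _ = ∫⁻ _, (1:ℝ≥0∞) ∂Pr + ∫⁻ ω, G ω ∂Pr := lintegral_add_left measurable_const _
    _ = 1 + ∑' t : ℕ, (t : ℝ≥0∞) * Pr (F t) := by
        congr 1
        · simp
        · rw [hGdef]
          rw [lintegral_tsum fun t => (measurable_const.indicator (hFmeas t)).aemeasurable]
          congr 1
          funext t
          rw [lintegral_indicator (hFmeas t), setLIntegral_const]
  have hsum_le : ∑' t : ℕ, (t : ℝ≥0∞) * Pr (F t) ≤
      ∑' t : ℕ, ENNReal.ofReal ((t : ℝ) * (K * x ^ t)) := by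
    apply ENNReal.tsum_le_tsum
    intro t
    rcases Nat.eq_zero_or_pos t with rfl | ht
    · simp
    · calc (t : ℝ≥0∞) * Pr (F t) ≤ (t : ℝ≥0∞) * ENNReal.ofReal (K * x ^ t) :=
          mul_le_mul_right (hPF t ht) _
      _ = ENNReal.ofReal ((t : ℝ) * (K * x ^ t)) := by
          rw [ENNReal.ofReal_mul (Nat.cast_nonneg t), ENNReal.ofReal_natCast]
  have hsummable : Summable (fun t : ℕ => (t : ℝ) * (K * x ^ t)) := by
    have h := (summable_pow_mul_geometric_of_norm_lt_one 1
      (by rwa [Real.norm_eq_abs, abs_of_pos hx0] : ‖x‖ < 1)).mul_left K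
    apply h.congr
    intro n
    push_cast
    ring
  have htsum : ∑' t : ℕ, ((t : ℝ) * (K * x ^ t)) = K * (x / (1 - x) ^ 2) := by
    have heq : (fun t : ℕ => (t : ℝ) * (K * x ^ t)) = fun t : ℕ => K * ((t : ℝ) * x ^ t) := by
      funext t; ring
    rw [heq, tsum_mul_left,
      tsum_coe_mul_geometric_of_norm_lt_one (by rwa [Real.norm_eq_abs, abs_of_pos hx0])]
  have hofsum : ∑' t : ℕ, ENNReal.ofReal ((t : ℝ) * (K * x ^ t)) =
      ENNReal.ofReal (K * (x / (1 - x) ^ 2)) := by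
    rw [← ENNReal.ofReal_tsum_of_nonneg (fun t => by positivity) hsummable, htsum]
  calc ∫⁻ ω, Z ω ∂Pr ≤ 1 + ∑' t : ℕ, (t : ℝ≥0∞) * Pr (F t) := hstep1
  _ ≤ 1 + ENNReal.ofReal (K * (x / (1 - x) ^ 2)) := by
      rw [← hofsum]
      exact add_le_add_right hsum_le 1
  _ = ENNReal.ofReal (1 + K * x / (1 - x) ^ 2) := by
      have h1x : 0 < 1 - x := by linarith
      rw [← ENNReal.ofReal_one, ← ENNReal.ofReal_add zero_le_one (by positivity)]
      congr 1
      ring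
end

section
/- Let μ : 𝒮 → ℝ satisfy 0 ≤ μ(s) ≤ μ_max for all s ∈ 𝒮, let γ = max_{s,s'∈𝒮} ‖P(s,·) − P(s',·)‖_TV, and assume γ < 1. Then for every probability vector φ₀ on 𝒮 and every integer T ≥ 1, Σ_{t=0}^{T−1} ( Σ_{s} π(s) μ(s) − Σ_{s} (φ₀ P^t)(s) μ(s) ) ≤ μ_max / (1 − γ). That is, the total expected regret of the optimal stationary policy, started from any initial distribution, is bounded by (1 − γ)^{−1} μ_max uniformly in T. -/
/-- Total variation distance between two functions on a finite set. -/
noncomputable def tvDist {S : Type*} [Fintype S] (φ ψ : S → ℝ) : ℝ :=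
  (1 / 2) * ∑ s, |φ s - ψ s|

lemma tv_contract {S : Type*} [Fintype S] (P : Matrix S S ℝ) (γ : ℝ)
    (hγ : ∀ s u, (1/2) * ∑ s', |P s s' - P u s'| ≤ γ) (δ : S → ℝ)
    (hδ : ∑ s, δ s = 0) :
    ∑ s', |∑ s, δ s * P s s'| ≤ γ * ∑ s, |δ s| := by
  set δp : S → ℝ := fun s => max (δ s) 0 with hδp
  set δm : S → ℝ := fun s => max (-δ s) 0 with hδm
  have hp0 : ∀ s, 0 ≤ δp s := fun s => le_max_right _ _
  have hm0 : ∀ s, 0 ≤ δm s := fun s => le_max_right _ _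
  have hpm : ∀ s, δ s = δp s - δm s := fun s => (max_zero_sub_max_neg_zero_eq_self (δ s)).symm
  have habs : ∀ s, |δ s| = δp s + δm s := fun s => (max_zero_add_max_neg_zero_eq_abs_self (δ s)).symm
  set c : ℝ := ∑ s, δp s with hc
  have hc0 : 0 ≤ c := Finset.sum_nonneg fun s _ => hp0 s
  have hmc : ∑ s, δm s = c := by
    have : ∑ s, δp s - ∑ s, δm s = 0 := by
      rw [← Finset.sum_sub_distrib]
      simpa only [← hpm] using hδ
    linarith
  have hsum : ∑ s, |δ s| = 2 * c := by
    simp only [habs, Finset.sum_add_distrib, hmc, ← hc]; ring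
  rcases eq_or_lt_of_le hc0 with hc0' | hcpos
  · -- c = 0 : δ = 0
    have hp : ∀ s ∈ Finset.univ, δp s = 0 := by
      intro s _
      exact le_antisymm (by
        have := (Finset.sum_eq_zero_iff_of_nonneg (fun s _ => hp0 s)).1 hc0'.symm s (Finset.mem_univ s)
        exact le_of_eq this) (hp0 s)
    have hm : ∀ s ∈ Finset.univ, δm s = 0 := by
      intro s _
      have h0 : ∑ s, δm s = 0 := by rw [hmc, ← hc0']
      exact (Finset.sum_eq_zero_iff_of_nonneg (fun s _ => hm0 s)).1 h0 s (Finset.mem_univ s)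
    have hz : ∀ s, δ s = 0 := fun s => by
      rw [hpm s, hp s (Finset.mem_univ s), hm s (Finset.mem_univ s), sub_zero]
    simp [hz, hsum.symm]
  · -- c > 0
    have key : ∀ s', c * (∑ s, δ s * P s s') =
        ∑ s, ∑ u, δp s * δm u * (P s s' - P u s') := by
      intro s'
      have expand : ∀ s, ∑ u, δp s * δm u * (P s s' - P u s') =
          δp s * P s s' * c - δp s * ∑ u, δm u * P u s' := by
        intro s
        rw [← hmc, Finset.mul_sum, Finset.mul_sum, ← Finset.sum_sub_distrib]
        exact Finset.sum_congr rfl fun u _ => by ring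
      rw [Finset.sum_congr rfl fun s _ => expand s, Finset.sum_sub_distrib,
        ← Finset.sum_mul, ← Finset.sum_mul]
      simp only [hpm, sub_mul, Finset.sum_sub_distrib]
      ring
    have step : ∀ s', c * |∑ s, δ s * P s s'| ≤
        ∑ s, ∑ u, δp s * δm u * |P s s' - P u s'| := by
      intro s'
      calc c * |∑ s, δ s * P s s'| = |c * (∑ s, δ s * P s s')| := by
            rw [abs_mul, abs_of_nonneg hc0]
        _ = |∑ s, ∑ u, δp s * δm u * (P s s' - P u s')| := by rw [key s']
        _ ≤ ∑ s, ∑ u, |δp s * δm u * (P s s' - P u s')| := by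
            refine (Finset.abs_sum_le_sum_abs _ _).trans ?_
            exact Finset.sum_le_sum fun s _ => Finset.abs_sum_le_sum_abs _ _
        _ = ∑ s, ∑ u, δp s * δm u * |P s s' - P u s'| := by
            refine Finset.sum_congr rfl fun s _ => Finset.sum_congr rfl fun u _ => ?_
            rw [abs_mul, abs_mul, abs_of_nonneg (hp0 s), abs_of_nonneg (hm0 u)]
    have total : c * ∑ s', |∑ s, δ s * P s s'| ≤ 2 * γ * c * c := by
      calc c * ∑ s', |∑ s, δ s * P s s'| = ∑ s', c * |∑ s, δ s * P s s'| := Finset.mul_sum _ _ _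
        _ ≤ ∑ s', ∑ s, ∑ u, δp s * δm u * |P s s' - P u s'| :=
            Finset.sum_le_sum fun s' _ => step s'
        _ = ∑ s, ∑ u, δp s * δm u * ∑ s', |P s s' - P u s'| := by
            rw [Finset.sum_comm]
            refine Finset.sum_congr rfl fun s _ => ?_
            rw [Finset.sum_comm]
            refine Finset.sum_congr rfl fun u _ => ?_
            rw [Finset.mul_sum]
        _ ≤ ∑ s, ∑ u, δp s * δm u * (2 * γ) := by
            refine Finset.sum_le_sum fun s _ => Finset.sum_le_sum fun u _ => ?_
            refine mul_le_mul_of_nonneg_left ?_ (mul_nonneg (hp0 s) (hm0 u))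
            have := hγ s u; linarith
        _ = 2 * γ * c * c := by
            simp only [← Finset.sum_mul, ← Finset.mul_sum]
            rw [hmc]; ring
    have := (mul_le_mul_iff_right₀ hcpos).1 (by linarith : c * ∑ s', |∑ s, δ s * P s s'| ≤ c * (γ * (2*c)))
    rw [hsum]
    linarith

lemma step_bound' {S : Type*} [Fintype S] (δ μ : S → ℝ) (μmax : ℝ)
    (hδ : ∑ s, δ s = 0) (hμ : ∀ s, 0 ≤ μ s ∧ μ s ≤ μmax) :
    ∑ s, δ s * μ s ≤ μmax * ((1/2) * ∑ s, |δ s|) := by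
  have h1 : ∀ s, δ s * μ s ≤ max (δ s) 0 * μmax := by
    intro s
    calc δ s * μ s ≤ max (δ s) 0 * μ s :=
          mul_le_mul_of_nonneg_right (le_max_left _ _) (hμ s).1
      _ ≤ max (δ s) 0 * μmax :=
          mul_le_mul_of_nonneg_left (hμ s).2 (le_max_right _ _)
  have h2 : ∑ s, max (δ s) 0 = (1/2) * ∑ s, |δ s| := by
    have ha : ∑ s, |δ s| = ∑ s, (max (δ s) 0 + max (-δ s) 0) :=
      Finset.sum_congr rfl fun s _ => (max_zero_add_max_neg_zero_eq_abs_self (δ s)).symm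
    have hb : ∑ s, (max (δ s) 0 - max (-δ s) 0) = 0 := by
      rw [Finset.sum_congr rfl fun s _ => max_zero_sub_max_neg_zero_eq_self (δ s)]
      exact hδ
    rw [Finset.sum_add_distrib] at ha
    rw [Finset.sum_sub_distrib] at hb
    linarith
  calc ∑ s, δ s * μ s ≤ ∑ s, max (δ s) 0 * μmax := Finset.sum_le_sum fun s _ => h1 s
    _ = (∑ s, max (δ s) 0) * μmax := by rw [Finset.sum_mul]
    _ = μmax * ((1/2) * ∑ s, |δ s|) := by rw [h2]; ring


/-- Regret of the optimal stationary policy: for an ergodic transition matrix `P`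
with stationary distribution `π`, one-step Dobrushin coefficient `γ < 1`, and
rewards `0 ≤ μ(s) ≤ μ_max`, the cumulative gap between the stationary average
reward and the expected reward at times `0, …, T−1`, started from any initial
distribution `φ₀`, is at most `μ_max / (1 − γ)`. -/
theorem optimal_policy_regret_bound {S : Type*} [Fintype S] [DecidableEq S]
    [Nonempty S]
    (P : Matrix S S ℝ) (hP0 : ∀ s s', 0 ≤ P s s') (hP1 : ∀ s, ∑ s', P s s' = 1)
    (π : S → ℝ) (hπ0 : ∀ s, 0 ≤ π s) (hπ1 : ∑ s, π s = 1)
    (hstat : ∀ s', ∑ s, π s * P s s' = π s')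
    (μ : S → ℝ) (μmax : ℝ) (hμ : ∀ s, 0 ≤ μ s ∧ μ s ≤ μmax)
    (γ : ℝ) (hγdef : γ = ⨆ s, ⨆ s', tvDist (P s) (P s')) (hγ : γ < 1) :
    ∀ φ₀ : S → ℝ, (∀ s, 0 ≤ φ₀ s) → (∑ s, φ₀ s = 1) → ∀ T : ℕ, 1 ≤ T →
      ∑ t ∈ Finset.range T,
          ((∑ s, π s * μ s) - ∑ s, (Matrix.vecMul φ₀ (P ^ t)) s * μ s) ≤
        μmax / (1 - γ) := by
  intro φ₀ hφ0 hφ1 T hT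
  -- γ dominates all pairwise TV distances and is nonnegative
  have hγ' : ∀ s u, tvDist (P s) (P u) ≤ γ := by
    intro s u
    rw [hγdef]
    have h1 : tvDist (P s) (P u) ≤ ⨆ u', tvDist (P s) (P u') :=
      le_ciSup (f := fun u' => tvDist (P s) (P u'))
        (Set.Finite.bddAbove (Set.finite_range _)) u
    exact h1.trans (le_ciSup (f := fun s => ⨆ u', tvDist (P s) (P u'))
      (Set.Finite.bddAbove (Set.finite_range _)) s)
  have hγ0 : 0 ≤ γ := by
    obtain ⟨s⟩ := (inferInstance : Nonempty S)
    have := hγ' s s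
    simpa [tvDist] using this
  have hμ0 : 0 ≤ μmax := by
    obtain ⟨s⟩ := (inferInstance : Nonempty S)
    exact (hμ s).1.trans (hμ s).2
  -- the deviation from stationarity
  set δ : ℕ → S → ℝ := fun t s => π s - (Matrix.vecMul φ₀ (P ^ t)) s with hδdef
  have hφsum : ∀ t, ∑ s, (Matrix.vecMul φ₀ (P ^ t)) s = 1 := by
    intro t
    induction t with
    | zero => simpa [Matrix.vecMul, dotProduct, Matrix.one_apply] using hφ1
    | succ t ih =>
      have : ∀ s', (Matrix.vecMul φ₀ (P ^ (t+1))) s' =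
          ∑ s, (Matrix.vecMul φ₀ (P ^ t)) s * P s s' := by
        intro s'
        rw [pow_succ, ← Matrix.vecMul_vecMul]
        simp [Matrix.vecMul, dotProduct]
      rw [Finset.sum_congr rfl fun s' _ => this s', Finset.sum_comm]
      calc ∑ s, ∑ s', (Matrix.vecMul φ₀ (P ^ t)) s * P s s'
          = ∑ s, (Matrix.vecMul φ₀ (P ^ t)) s * ∑ s', P s s' := by
            exact Finset.sum_congr rfl fun s _ => (Finset.mul_sum _ _ _).symm
        _ = 1 := by simp only [hP1, mul_one]; exact ih
  have hδsum : ∀ t, ∑ s, δ t s = 0 := by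
    intro t
    simp only [hδdef, Finset.sum_sub_distrib, hπ1, hφsum t, sub_self]
  have hrec : ∀ t s', δ (t+1) s' = ∑ s, δ t s * P s s' := by
    intro t s'
    have hv : (Matrix.vecMul φ₀ (P ^ (t+1))) s' =
        ∑ s, (Matrix.vecMul φ₀ (P ^ t)) s * P s s' := by
      rw [pow_succ, ← Matrix.vecMul_vecMul]
      simp [Matrix.vecMul, dotProduct]
    simp only [hδdef, hv, ← hstat s', ← Finset.sum_sub_distrib]
    exact Finset.sum_congr rfl fun s _ => by ring
  -- contraction: a t ≤ 2 γ^t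
  have hcontr : ∀ t, ∑ s, |δ t s| ≤ 2 * γ ^ t := by
    intro t
    induction t with
    | zero =>
      have : ∀ s, |δ 0 s| ≤ π s + φ₀ s := by
        intro s
        have h0 : (Matrix.vecMul φ₀ (P ^ 0)) s = φ₀ s := by
          simp [Matrix.vecMul, dotProduct, Matrix.one_apply]
        rw [hδdef]
        simp only [h0]
        rw [abs_sub_le_iff]
        constructor <;> [linarith [hπ0 s, hφ0 s]; linarith [hπ0 s, hφ0 s]]
      calc ∑ s, |δ 0 s| ≤ ∑ s, (π s + φ₀ s) := Finset.sum_le_sum fun s _ => this s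
        _ = 2 * γ ^ 0 := by rw [Finset.sum_add_distrib, hπ1, hφ1]; norm_num
    | succ t ih =>
      have h1 : ∑ s', |δ (t+1) s'| = ∑ s', |∑ s, δ t s * P s s'| :=
        Finset.sum_congr rfl fun s' _ => by rw [hrec t s']
      have h2 := tv_contract P γ (fun s u => by simpa [tvDist] using hγ' s u) (δ t) (hδsum t)
      calc ∑ s', |δ (t+1) s'| ≤ γ * ∑ s, |δ t s| := by rw [h1]; exact h2
        _ ≤ γ * (2 * γ ^ t) := mul_le_mul_of_nonneg_left ih hγ0
        _ = 2 * γ ^ (t+1) := by ring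
  -- per-step regret bound
  have hstep : ∀ t, (∑ s, π s * μ s) - ∑ s, (Matrix.vecMul φ₀ (P ^ t)) s * μ s ≤
      μmax * γ ^ t := by
    intro t
    have h1 : (∑ s, π s * μ s) - ∑ s, (Matrix.vecMul φ₀ (P ^ t)) s * μ s =
        ∑ s, δ t s * μ s := by
      rw [← Finset.sum_sub_distrib]
      exact Finset.sum_congr rfl fun s _ => by rw [hδdef]; ring
    rw [h1]
    calc ∑ s, δ t s * μ s ≤ μmax * ((1/2) * ∑ s, |δ t s|) :=
          step_bound' (δ t) μ μmax (hδsum t) hμ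
      _ ≤ μmax * γ ^ t := by
          refine mul_le_mul_of_nonneg_left ?_ hμ0
          have := hcontr t; linarith
  -- geometric sum
  have hgs : ∑ t ∈ Finset.range T, γ ^ t ≤ 1 / (1 - γ) := by
    rw [le_div_iff₀ (by linarith : (0:ℝ) < 1 - γ)]
    have h := geom_sum_mul γ T
    have hT0 : (0:ℝ) ≤ γ ^ T := pow_nonneg hγ0 T
    nlinarith [h]
  calc ∑ t ∈ Finset.range T,
        ((∑ s, π s * μ s) - ∑ s, (Matrix.vecMul φ₀ (P ^ t)) s * μ s)
      ≤ ∑ t ∈ Finset.range T, μmax * γ ^ t :=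
        Finset.sum_le_sum fun t _ => hstep t
    _ = μmax * ∑ t ∈ Finset.range T, γ ^ t := by rw [Finset.mul_sum]
    _ ≤ μmax * (1 / (1 - γ)) := mul_le_mul_of_nonneg_left hgs hμ0
    _ = μmax / (1 - γ) := by ring
end

section
/- Let t ≥ 1 and w > 0 be real numbers, and suppose that for each channel j an integer m_j ≥ w · ln t is given. Then ℙ( there exist a ∈ 𝒜 and j ≠ φ*(a) such that θ_{j, m_j}(a) ≥ θ_{φ*(a), m_{φ*(a)}}(a) ) ≤ 2 A (M − 1) · t^{−w Δ₃² / (2 B₀²)}. That is, if every channel has been explored at least w ln t times, the probability that the empirically best channel differs from the optimal channel for some action is at most 2A(M−1) t^{−wΔ₃²/(2B₀²)}. -/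
open MeasureTheory ProbabilityTheory

section Helpers
open Real

lemma key_ineq (p h : ℝ) (hp0 : 0 ≤ p) (hp1 : p ≤ 1) :
    1 - p + p * exp h ≤ exp (p * h + h ^ 2 / 8) := by
  set u : ℝ → ℝ := fun x => 1 - p + p * exp x with hu_def
  set v : ℝ → ℝ := fun x => p * exp x with hv_def
  have hu : ∀ x, 0 < u x := by
    intro x
    rcases eq_or_lt_of_le hp0 with h0 | h0
    · simp [hu_def, ← h0]
    · have := exp_pos x
      simp only [hu_def]
      nlinarith
  have hv0 : ∀ x, 0 ≤ v x := fun x => by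
    have := (exp_pos x).le; simp only [hv_def]; positivity
  have hvu : ∀ x, v x ≤ u x := fun x => by
    simp only [hu_def, hv_def]; linarith
  have hu' : ∀ x, HasDerivAt u (v x) x := fun x => by
    exact ((Real.hasDerivAt_exp x).const_mul p).const_add (1 - p)
  set g : ℝ → ℝ := fun y => p * y + y ^ 2 / 8 - Real.log (u y) with hg_def
  set D : ℝ → ℝ := fun x => p + x / 4 - v x / u x with hD_def
  have hgD : ∀ x, HasDerivAt g (D x) x := by
    intro x
    have h1 : HasDerivAt (fun y : ℝ => p * y) p x := by
      simpa using (hasDerivAt_id x).const_mul p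
    have h2 : HasDerivAt (fun y : ℝ => y ^ 2 / 8) (x / 4) x := by
      have := (hasDerivAt_pow 2 x).div_const 8
      refine this.congr_deriv ?_
      ring
    have h3 : HasDerivAt (fun y => Real.log (u y)) (v x / u x) x :=
      (hu' x).log (hu x).ne'
    exact (h1.add h2).sub h3
  have hD' : ∀ x, HasDerivAt D (1 / 4 - (v x * u x - v x * v x) / (u x) ^ 2) x := by
    intro x
    have hv' : ∀ y, HasDerivAt v (v y) y := fun y => (Real.hasDerivAt_exp y).const_mul p
    have h2 : HasDerivAt (fun y : ℝ => p + y / 4) (1 / 4) x := by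
      simpa using ((hasDerivAt_id x).div_const 4).const_add p
    have h3 : HasDerivAt (fun y => v y / u y) ((v x * u x - v x * v x) / (u x) ^ 2) x :=
      (hv' x).div (hu' x) (hu x).ne'
    exact h2.sub h3
  have hDmono : Monotone D := by
    refine monotone_of_deriv_nonneg (fun x => (hD' x).differentiableAt) (fun x => ?_)
    rw [(hD' x).deriv]
    have hq : (v x * u x - v x * v x) / (u x) ^ 2 ≤ 1 / 4 := by
      rw [div_le_div_iff₀ (pow_pos (hu x) 2) (by norm_num)]
      nlinarith [sq_nonneg (u x - 2 * v x), hv0 x, hvu x, hu x]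
    linarith
  have hD0 : D 0 = 0 := by
    have hu0 : u 0 = 1 := by simp [hu_def]
    simp [hD_def, hv_def, hu0]
  have hg0 : g 0 = 0 := by
    have hu0 : u 0 = 1 := by simp [hu_def]
    simp [hg_def, hu0]
  have hgnonneg : 0 ≤ g h := by
    rcases le_total 0 h with hh | hh
    · have hmono : MonotoneOn g (Set.Ici (0 : ℝ)) := by
        refine monotoneOn_of_deriv_nonneg (convex_Ici 0)
          (fun x _ => ((hgD x).differentiableAt).continuousAt.continuousWithinAt) ?_ ?_
        · exact fun x hx => ((hgD x).differentiableAt).differentiableWithinAt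
        · intro x hx
          rw [(hgD x).deriv]
          have : (0:ℝ) ≤ x := by
            rw [interior_Ici] at hx; exact le_of_lt hx
          calc (0:ℝ) = D 0 := hD0.symm
            _ ≤ D x := hDmono this
      have := hmono (Set.self_mem_Ici) (Set.mem_Ici.mpr hh) hh
      rwa [hg0] at this
    · have hanti : AntitoneOn g (Set.Iic (0 : ℝ)) := by
        refine antitoneOn_of_deriv_nonpos (convex_Iic 0)
          (fun x _ => ((hgD x).differentiableAt).continuousAt.continuousWithinAt) ?_ ?_
        · exact fun x hx => ((hgD x).differentiableAt).differentiableWithinAt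
        · intro x hx
          rw [(hgD x).deriv]
          have : x ≤ (0:ℝ) := by
            rw [interior_Iic] at hx; exact le_of_lt hx
          calc D x ≤ D 0 := hDmono this
            _ = 0 := hD0
      have := hanti (Set.mem_Iic.mpr hh) (Set.self_mem_Iic) hh
      rwa [hg0] at this
  have hlog : Real.log (u h) ≤ p * h + h ^ 2 / 8 := by
    simp only [hg_def] at hgnonneg; linarith
  exact (Real.log_le_iff_le_exp (hu h)).mp hlog


lemma integrable_exp_mul_of_Icc {Ω : Type*} [MeasurableSpace Ω] (ν : Measure Ω)
    [IsProbabilityMeasure ν] {Z : Ω → ℝ} (hZ : Measurable Z) {lo hi : ℝ}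
    (hb : ∀ ω, Z ω ∈ Set.Icc lo hi) (s : ℝ) :
    Integrable (fun ω => exp (s * Z ω)) ν := by
  refine Integrable.mono' (integrable_const (max (exp (s * lo)) (exp (s * hi))))
    (measurable_exp.comp (hZ.const_mul s)).aestronglyMeasurable ?_
  filter_upwards with ω
  rw [Real.norm_eq_abs, abs_of_pos (exp_pos _)]
  rcases le_or_gt 0 s with hs | hs
  · exact le_max_of_le_right (exp_le_exp.mpr (by nlinarith [(hb ω).2]))
  · exact le_max_of_le_left (exp_le_exp.mpr (by nlinarith [(hb ω).1]))

lemma integrable_of_Icc {Ω : Type*} [MeasurableSpace Ω] (ν : Measure Ω)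
    [IsProbabilityMeasure ν] {Z : Ω → ℝ} (hZ : Measurable Z) {lo hi : ℝ}
    (hb : ∀ ω, Z ω ∈ Set.Icc lo hi) : Integrable Z ν := by
  refine Integrable.mono' (integrable_const (max |lo| |hi|)) hZ.aestronglyMeasurable ?_
  filter_upwards with ω
  rw [Real.norm_eq_abs]
  refine abs_le.mpr ⟨?_, ?_⟩
  · have := neg_abs_le lo
    have := (hb ω).1
    have := le_max_left |lo| |hi|
    linarith
  · have := le_abs_self hi
    have := (hb ω).2
    have := le_max_right |lo| |hi|
    linarith

lemma hoeffding_mgf {Ω : Type*} [MeasurableSpace Ω] (ν : Measure Ω) [IsProbabilityMeasure ν]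
    {Z : Ω → ℝ} (hZ : Measurable Z) {lo hi : ℝ} (hb : ∀ ω, Z ω ∈ Set.Icc lo hi) (s : ℝ) :
    mgf Z ν s ≤ exp (s * (∫ ω, Z ω ∂ν) + s ^ 2 * (hi - lo) ^ 2 / 8) := by
  rcases isEmpty_or_nonempty Ω with hE | hE
  · have h1 := measure_univ (μ := ν)
    rw [Set.univ_eq_empty_iff.2 hE, measure_empty] at h1
    simp at h1
  obtain ⟨ω₀⟩ := hE
  have hlohi : lo ≤ hi := le_trans (hb ω₀).1 (hb ω₀).2
  have hZint : Integrable Z ν := integrable_of_Icc ν hZ hb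
  set μ0 : ℝ := ∫ ω, Z ω ∂ν with hμ0_def
  have hμlo : lo ≤ μ0 := by
    have := integral_mono (integrable_const lo) hZint (fun ω => (hb ω).1)
    simpa using this
  have hμhi : μ0 ≤ hi := by
    have := integral_mono hZint (integrable_const hi) (fun ω => (hb ω).2)
    simpa using this
  rcases eq_or_lt_of_le hlohi with heq | hlt
  · -- constant case
    have hZc : Z = fun _ => lo := funext fun ω =>
      le_antisymm (heq ▸ (hb ω).2) (hb ω).1
    have hμ0c : μ0 = lo := by rw [hμ0_def, hZc]; simp
    rw [hZc, mgf_const, hμ0c]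
    rw [exp_le_exp]
    nlinarith [sq_nonneg s, sq_nonneg (hi - lo)]
  · have hne : hi - lo ≠ 0 := sub_ne_zero.mpr hlt.ne'
    set E1c : ℝ := exp (s * lo) with hE1c
    set E2c : ℝ := exp (s * hi) with hE2c
    set c2 : ℝ := (E2c - E1c) / (hi - lo) with hc2
    set c1 : ℝ := (hi * E1c - lo * E2c) / (hi - lo) with hc1
    have hpt : ∀ ω, exp (s * Z ω) ≤ c1 + c2 * Z ω := by
      intro ω
      obtain ⟨hz1, hz2⟩ := hb ω
      set z := Z ω
      have ha : (0:ℝ) ≤ (hi - z) / (hi - lo) := div_nonneg (by linarith) (by linarith)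
      have hb' : (0:ℝ) ≤ (z - lo) / (hi - lo) := div_nonneg (by linarith) (by linarith)
      have hab : (hi - z) / (hi - lo) + (z - lo) / (hi - lo) = 1 := by
        rw [← add_div]
        field_simp
        ring
      have hcx := convexOn_exp.2 (Set.mem_univ (s * lo)) (Set.mem_univ (s * hi)) ha hb' hab
      simp only [smul_eq_mul] at hcx
      have harg : (hi - z) / (hi - lo) * (s * lo) + (z - lo) / (hi - lo) * (s * hi) = s * z := by
        field_simp [hne]
        ring
      rw [harg] at hcx
      refine hcx.trans (le_of_eq ?_)
      rw [hc1, hc2, hE1c, hE2c]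
      field_simp [hne]
      ring
    have hint : Integrable (fun ω => exp (s * Z ω)) ν := integrable_exp_mul_of_Icc ν hZ hb s
    have hmgf : mgf Z ν s ≤ c1 + c2 * μ0 := by
      have h1 : mgf Z ν s ≤ ∫ ω, (c1 + c2 * Z ω) ∂ν :=
        integral_mono hint ((integrable_const c1).add (hZint.const_mul c2)) hpt
      have h2 : ∫ ω, (c1 + c2 * Z ω) ∂ν = c1 + c2 * μ0 := by
        rw [integral_add (integrable_const c1) (hZint.const_mul c2),
          MeasureTheory.integral_const_mul, integral_const]
        simp
        exact Or.inl hμ0_def.symm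
      rw [h2] at h1
      exact h1
    refine hmgf.trans ?_
    set p : ℝ := (μ0 - lo) / (hi - lo) with hp_def
    have hp0 : 0 ≤ p := div_nonneg (by linarith) (by linarith)
    have hp1 : p ≤ 1 := by
      rw [hp_def, div_le_one (by linarith)]
      linarith
    have hE : E2c = E1c * exp (s * (hi - lo)) := by
      rw [hE1c, hE2c, ← Real.exp_add]
      ring_nf
    have hkey := key_ineq p (s * (hi - lo)) hp0 hp1
    have heq1 : c1 + c2 * μ0 = E1c * (1 - p + p * exp (s * (hi - lo))) := by
      rw [hc1, hc2, hE, hp_def]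
      field_simp [hne]
      ring
    have heq2 : E1c * exp (p * (s * (hi - lo)) + (s * (hi - lo)) ^ 2 / 8) =
        exp (s * μ0 + s ^ 2 * (hi - lo) ^ 2 / 8) := by
      rw [hE1c, ← Real.exp_add]
      congr 1
      have hpmul : p * (hi - lo) = μ0 - lo := by
        rw [hp_def]; field_simp [hne]
      have : p * (s * (hi - lo)) = s * (μ0 - lo) := by
        rw [show p * (s * (hi - lo)) = s * (p * (hi - lo)) by ring, hpmul]
      rw [this]
      ring
    rw [heq1, ← heq2]
    exact mul_le_mul_of_nonneg_left hkey (exp_pos _).le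

lemma chernoff_upper {Ω ι : Type*} [MeasurableSpace Ω] (ν : Measure Ω) [IsProbabilityMeasure ν]
    (Y : ι → Ω → ℝ) (hmeas : ∀ i, Measurable (Y i))
    (hindep : iIndepFun Y ν)
    {lo hi : ℝ} (hlohi : lo < hi) (s : Finset ι)
    (hb : ∀ i ∈ s, ∀ ω, Y i ω ∈ Set.Icc lo hi)
    (μ0 : ℝ) (hμ0 : ∀ i ∈ s, (∫ ω, Y i ω ∂ν) = μ0)
    (ε : ℝ) (hε : 0 < ε) :
    (ν {ω | (s.card : ℝ) * (μ0 + ε) ≤ ∑ i ∈ s, Y i ω}).toReal ≤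
      exp (-(s.card : ℝ) * (2 * ε ^ 2 / (hi - lo) ^ 2)) := by
  classical
  have hΔ : (0:ℝ) < hi - lo := by linarith
  set r : ℝ := 4 * ε / (hi - lo) ^ 2 with hr_def
  have hr : 0 < r := by positivity
  have h_int : ∀ i ∈ s, Integrable (fun ω => exp (r * Y i ω)) ν := fun i hi' =>
    integrable_exp_mul_of_Icc ν (hmeas i) (hb i hi') r
  have hintsum : Integrable (fun ω => exp (r * (∑ i ∈ s, Y i) ω)) ν :=
    hindep.integrable_exp_mul_sum hmeas h_int
  have hch := measure_ge_le_exp_mul_mgf (μ := ν) (X := ∑ i ∈ s, Y i)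
    ((s.card : ℝ) * (μ0 + ε)) hr.le hintsum
  have hset : {ω | (s.card : ℝ) * (μ0 + ε) ≤ ∑ i ∈ s, Y i ω} =
      {ω | (s.card : ℝ) * (μ0 + ε) ≤ (∑ i ∈ s, Y i) ω} := by
    simp [Finset.sum_apply]
  rw [hset]
  refine hch.trans ?_
  have hprod : mgf (∑ i ∈ s, Y i) ν r ≤ exp (r * μ0 + r ^ 2 * (hi - lo) ^ 2 / 8) ^ s.card := by
    rw [hindep.mgf_sum hmeas]
    calc ∏ i ∈ s, mgf (Y i) ν r
        ≤ ∏ i ∈ s, exp (r * μ0 + r ^ 2 * (hi - lo) ^ 2 / 8) := by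
          refine Finset.prod_le_prod (fun i _ => mgf_nonneg) (fun i hi' => ?_)
          have := hoeffding_mgf ν (hmeas i) (hb i hi') r
          rwa [hμ0 i hi'] at this
      _ = exp (r * μ0 + r ^ 2 * (hi - lo) ^ 2 / 8) ^ s.card := Finset.prod_const _
  calc exp (-r * ((s.card : ℝ) * (μ0 + ε))) * mgf (∑ i ∈ s, Y i) ν r
      ≤ exp (-r * ((s.card : ℝ) * (μ0 + ε))) *
        exp (r * μ0 + r ^ 2 * (hi - lo) ^ 2 / 8) ^ s.card :=
        mul_le_mul_of_nonneg_left hprod (exp_pos _).le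
    _ = exp (-r * ((s.card : ℝ) * (μ0 + ε)) + (s.card : ℝ) * (r * μ0 + r ^ 2 * (hi - lo) ^ 2 / 8)) := by
        rw [← Real.exp_nat_mul, ← Real.exp_add]
    _ ≤ exp (-(s.card : ℝ) * (2 * ε ^ 2 / (hi - lo) ^ 2)) := by
        rw [exp_le_exp]
        have hkey : -r * ε + r ^ 2 * (hi - lo) ^ 2 / 8 = -(2 * ε ^ 2 / (hi - lo) ^ 2) := by
          rw [hr_def]
          field_simp
          ring
        nlinarith [Nat.cast_nonneg (α := ℝ) s.card, hkey]

lemma chernoff_lower {Ω ι : Type*} [MeasurableSpace Ω] (ν : Measure Ω) [IsProbabilityMeasure ν]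
    (Y : ι → Ω → ℝ) (hmeas : ∀ i, Measurable (Y i))
    (hindep : iIndepFun Y ν)
    {lo hi : ℝ} (hlohi : lo < hi) (s : Finset ι)
    (hb : ∀ i ∈ s, ∀ ω, Y i ω ∈ Set.Icc lo hi)
    (μ0 : ℝ) (hμ0 : ∀ i ∈ s, (∫ ω, Y i ω ∂ν) = μ0)
    (ε : ℝ) (hε : 0 < ε) :
    (ν {ω | ∑ i ∈ s, Y i ω ≤ (s.card : ℝ) * (μ0 - ε)}).toReal ≤
      exp (-(s.card : ℝ) * (2 * ε ^ 2 / (hi - lo) ^ 2)) := by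
  have hind' : iIndepFun
      (fun i => (fun x : ℝ => -x) ∘ Y i) ν :=
    hindep.comp (fun _ => fun x : ℝ => -x) (fun _ => measurable_neg)
  have h := chernoff_upper ν (fun i => (fun x : ℝ => -x) ∘ Y i)
    (fun i => (hmeas i).neg) hind' (lo := -hi) (hi := -lo) (by linarith) s
    (fun i hi' ω => ⟨by simpa using neg_le_neg (hb i hi' ω).2, by simpa using neg_le_neg (hb i hi' ω).1⟩)
    (-μ0) (fun i hi' => by
      simp only [Function.comp]
      rw [integral_neg, hμ0 i hi'])
    ε hε
  have hset : {ω | (s.card : ℝ) * (-μ0 + ε) ≤ ∑ i ∈ s, ((fun x : ℝ => -x) ∘ Y i) ω} =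
      {ω | ∑ i ∈ s, Y i ω ≤ (s.card : ℝ) * (μ0 - ε)} := by
    ext ω
    simp only [Set.mem_setOf_eq, Function.comp_apply, Finset.sum_neg_distrib]
    constructor <;> intro h' <;> nlinarith
  rw [hset] at h
  have harith : -lo - -hi = hi - lo := by ring
  rw [harith] at h
  exact h
end Helpers


/-- If every channel has been explored at least `w ln t` times, the probability
that the empirically best channel differs from the optimal channel for some
action is at most `2 A (M − 1) t^{−w Δ₃²/(2B₀²)}`. -/
theorem mc_lpsm_channel_error_prob
    {Ω : Type*} [MeasurableSpace Ω] (Pr : Measure Ω) [IsProbabilityMeasure Pr]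
    {𝒳 : Type*} [MeasurableSpace 𝒳]
    (M : ℕ) (hM : 2 ≤ M)
    (X : Fin M × ℕ → Ω → 𝒳) (hXmeas : ∀ i, Measurable (X i))
    (hindep : iIndepFun X Pr)
    (hident : ∀ (j : Fin M) (k : ℕ), 1 ≤ k →
      IdentDistrib (X (j, k)) (X (j, 1)) Pr Pr)
    {𝒜 : Type*} [Fintype 𝒜] [Nonempty 𝒜]
    (f : 𝒜 → 𝒳 → ℝ) (hfmeas : ∀ a, Measurable (f a))
    (B₀ : ℝ) (hB₀ : 0 < B₀) (hbd : ∀ a x y, |f a x - f a y| ≤ B₀)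
    (μ : Fin M → 𝒜 → ℝ) (hμ : ∀ j a, μ j a = ∫ ω, f a (X (j, 1) ω) ∂Pr)
    (θ : Fin M → ℕ → Ω → 𝒜 → ℝ)
    (hθ : ∀ j m ω a, θ j m ω a = (∑ k ∈ Finset.Icc 1 m, f a (X (j, k) ω)) / m)
    (φs : 𝒜 → Fin M) (hφs : ∀ a j, j ≠ φs a → μ j a < μ (φs a) a)
    (Δ₃ : ℝ) (hΔ₃pos : 0 < Δ₃)
    (hΔ₃ : Δ₃ = ⨅ a : 𝒜, ⨅ j : {j : Fin M // j ≠ φs a},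
      (μ (φs a) a - μ (j : Fin M) a))
    (t w : ℝ) (ht : 1 ≤ t) (hw : 0 < w)
    (m : Fin M → ℕ) (hm : ∀ j, w * Real.log t ≤ (m j : ℝ)) :
    (Pr {ω | ∃ a : 𝒜, ∃ j : Fin M, j ≠ φs a ∧
        θ (φs a) (m (φs a)) ω a ≤ θ j (m j) ω a}).toReal ≤
      2 * (Fintype.card 𝒜 : ℝ) * ((M : ℝ) - 1) *
        t ^ (-(w * Δ₃ ^ 2) / (2 * B₀ ^ 2)) := by
  classical
  rcases isEmpty_or_nonempty Ω with hE | hE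
  · have h1 := measure_univ (μ := Pr)
    rw [Set.univ_eq_empty_iff.2 hE, measure_empty] at h1
    simp at h1
  obtain ⟨ω₀⟩ := hE
  have hA1 : (1:ℝ) ≤ (Fintype.card 𝒜 : ℝ) := by exact_mod_cast Fintype.card_pos
  have hM1 : (1:ℝ) ≤ (M:ℝ) - 1 := by
    have : (2:ℝ) ≤ (M:ℝ) := by exact_mod_cast hM
    linarith
  rcases eq_or_lt_of_le ht with ht1 | ht1
  · rw [← ht1, Real.one_rpow]
    have hle1 : (Pr {ω | ∃ a : 𝒜, ∃ j : Fin M, j ≠ φs a ∧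
        θ (φs a) (m (φs a)) ω a ≤ θ j (m j) ω a}).toReal ≤ 1 := by
      have := ENNReal.toReal_mono (ENNReal.one_ne_top) (prob_le_one (μ := Pr)
        (s := {ω | ∃ a : 𝒜, ∃ j : Fin M, j ≠ φs a ∧
          θ (φs a) (m (φs a)) ω a ≤ θ j (m j) ω a}))
      simpa using this
    nlinarith
  have ht0 : (0:ℝ) < t := by linarith
  have hlogt : 0 < Real.log t := Real.log_pos ht1
  have hmpos : ∀ j, (0:ℝ) < m j := fun j =>
    lt_of_lt_of_le (by positivity) (hm j)
  set x₀ : 𝒳 := X (⟨0, by omega⟩, 0) ω₀ with hx₀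
  set lo : 𝒜 → ℝ := fun a => sInf (Set.range (f a)) with hlo_def
  have hbdd : ∀ a, BddBelow (Set.range (f a)) := fun a =>
    ⟨f a x₀ - B₀, by
      rintro y ⟨x, rfl⟩
      have h := abs_le.mp (hbd a x₀ x)
      linarith [h.1, h.2]⟩
  have hmem : ∀ a x, f a x ∈ Set.Icc (lo a) (lo a + B₀) := by
    intro a x
    constructor
    · exact csInf_le (hbdd a) ⟨x, rfl⟩
    · have h2 : f a x - B₀ ≤ lo a := by
        refine le_csInf ⟨f a x₀, ⟨x₀, rfl⟩⟩ ?_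
        rintro y ⟨x', rfl⟩
        have h := abs_le.mp (hbd a x x')
        linarith [h.2]
      linarith
  have hlolt : ∀ a, lo a < lo a + B₀ := fun a => by linarith
  set ε : ℝ := Δ₃ / 2 with hε_def
  have hε : 0 < ε := by rw [hε_def]; positivity
  have hΔle : ∀ a (j : Fin M), j ≠ φs a → Δ₃ ≤ μ (φs a) a - μ j a := by
    intro a j hj
    rw [hΔ₃]
    refine le_trans (ciInf_le (Set.Finite.bddBelow (Set.finite_range _)) a) ?_
    exact ciInf_le (Set.Finite.bddBelow (Set.finite_range _)) (⟨j, hj⟩ : {j' : Fin M // j' ≠ φs a})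
  set δt : ℝ := t ^ (-(w * Δ₃ ^ 2) / (2 * B₀ ^ 2)) with hδt_def
  have hδt_exp : δt = Real.exp (Real.log t * (-(w * Δ₃ ^ 2) / (2 * B₀ ^ 2))) := by
    rw [hδt_def, Real.rpow_def_of_pos ht0]
  have hExpBound : ∀ j : Fin M, Real.exp (-(m j : ℝ) * (2 * ε ^ 2 / B₀ ^ 2)) ≤ δt := by
    intro j
    rw [hδt_exp, Real.exp_le_exp]
    have h1 : 2 * ε ^ 2 / B₀ ^ 2 = Δ₃ ^ 2 / (2 * B₀ ^ 2) := by
      rw [hε_def]; field_simp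
    rw [h1]
    have h2 : Real.log t * (-(w * Δ₃ ^ 2) / (2 * B₀ ^ 2)) =
        -(w * Real.log t) * (Δ₃ ^ 2 / (2 * B₀ ^ 2)) := by ring
    rw [h2]
    have h3 := hm j
    have hc : 0 ≤ Δ₃ ^ 2 / (2 * B₀ ^ 2) := by positivity
    nlinarith
  set Z : 𝒜 → (Fin M × ℕ) → Ω → ℝ := fun a i ω => f a (X i ω) with hZ_def
  have hZmeas : ∀ a i, Measurable (Z a i) := fun a i => (hfmeas a).comp (hXmeas i)
  have hZindep : ∀ a, iIndepFun (Z a) Pr :=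
    fun a => hindep.comp (fun _ => f a) (fun _ => hfmeas a)
  set emb : Fin M → (ℕ ↪ Fin M × ℕ) := fun j => ⟨fun k => (j, k), fun x y h => by simpa using h⟩
    with hemb
  set sfin : Fin M → Finset (Fin M × ℕ) := fun j => (Finset.Icc 1 (m j)).map (emb j) with hsfin
  have hcard : ∀ j, (sfin j).card = m j := by
    intro j; rw [hsfin]; simp
  have hsum : ∀ a j ω, ∑ i ∈ sfin j, Z a i ω = ∑ k ∈ Finset.Icc 1 (m j), f a (X (j, k) ω) := by
    intro a j ω
    rw [hsfin]
    simp only [Finset.sum_map]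
    rfl
  have hmemfin : ∀ a (j : Fin M), ∀ i ∈ sfin j, (∫ ω, Z a i ω ∂Pr) = μ j a := by
    intro a j i hi
    rw [hsfin] at hi
    obtain ⟨k, hk, rfl⟩ := Finset.mem_map.mp hi
    have hk1 : 1 ≤ k := (Finset.mem_Icc.mp hk).1
    have hid := (hident j k hk1).comp (hfmeas a)
    rw [hμ]
    exact hid.integral_eq
  have hbfin : ∀ a (j : Fin M), ∀ i ∈ sfin j, ∀ ω, Z a i ω ∈ Set.Icc (lo a) (lo a + B₀) :=
    fun a j i _ ω => hmem a (X i ω)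
  set E1 : 𝒜 → Fin M → Set Ω := fun a j =>
    {ω | (m j : ℝ) * (μ j a + ε) ≤ ∑ k ∈ Finset.Icc 1 (m j), f a (X (j, k) ω)} with hE1_def
  set E2 : 𝒜 → Set Ω := fun a =>
    {ω | ∑ k ∈ Finset.Icc 1 (m (φs a)), f a (X (φs a, k) ω) ≤
      (m (φs a) : ℝ) * (μ (φs a) a - ε)} with hE2_def
  have hE1bound : ∀ a j, (Pr (E1 a j)).toReal ≤ δt := by
    intro a j
    have h := chernoff_upper Pr (Z a) (hZmeas a) (hZindep a) (hlolt a) (sfin j)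
      (hbfin a j) (μ j a) (hmemfin a j) ε hε
    rw [hcard j] at h
    have hseteq : {ω | ((m j : ℕ) : ℝ) * (μ j a + ε) ≤ ∑ i ∈ sfin j, Z a i ω} = E1 a j := by
      ext ω
      rw [hE1_def]
      simp only [Set.mem_setOf_eq, hsum a j ω]
    rw [hseteq] at h
    have harith : lo a + B₀ - lo a = B₀ := by ring
    rw [harith] at h
    exact h.trans (hExpBound j)
  have hE2bound : ∀ a, (Pr (E2 a)).toReal ≤ δt := by
    intro a
    have h := chernoff_lower Pr (Z a) (hZmeas a) (hZindep a) (hlolt a) (sfin (φs a))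
      (hbfin a (φs a)) (μ (φs a) a) (hmemfin a (φs a)) ε hε
    rw [hcard (φs a)] at h
    have hseteq : {ω | ∑ i ∈ sfin (φs a), Z a i ω ≤ ((m (φs a) : ℕ) : ℝ) * (μ (φs a) a - ε)}
        = E2 a := by
      ext ω
      rw [hE2_def]
      simp only [Set.mem_setOf_eq, hsum a (φs a) ω]
    rw [hseteq] at h
    have harith : lo a + B₀ - lo a = B₀ := by ring
    rw [harith] at h
    exact h.trans (hExpBound (φs a))
  have hsub : {ω | ∃ a : 𝒜, ∃ j : Fin M, j ≠ φs a ∧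
      θ (φs a) (m (φs a)) ω a ≤ θ j (m j) ω a} ⊆
      ⋃ a ∈ (Finset.univ : Finset 𝒜), ⋃ j ∈ Finset.univ.erase (φs a), (E1 a j ∪ E2 a) := by
    rintro ω ⟨a, j, hj, hle⟩
    refine Set.mem_biUnion (Finset.mem_univ a) ?_
    refine Set.mem_biUnion (Finset.mem_erase.mpr ⟨hj, Finset.mem_univ j⟩) ?_
    by_contra hcon
    rw [Set.mem_union] at hcon
    push_neg at hcon
    obtain ⟨h1, h2⟩ := hcon
    rw [hE1_def] at h1
    rw [hE2_def] at h2
    simp only [Set.mem_setOf_eq, not_le] at h1 h2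
    rw [hθ, hθ] at hle
    have hj1 : (∑ k ∈ Finset.Icc 1 (m j), f a (X (j, k) ω)) / (m j : ℝ) < μ j a + ε := by
      rw [div_lt_iff₀ (hmpos j)]
      linarith
    have hj2 : μ (φs a) a - ε <
        (∑ k ∈ Finset.Icc 1 (m (φs a)), f a (X (φs a, k) ω)) / (m (φs a) : ℝ) := by
      rw [lt_div_iff₀ (hmpos (φs a))]
      linarith
    have hΔ := hΔle a j hj
    have hεeq : ε = Δ₃ / 2 := hε_def
    linarith
  have step1 : Pr {ω | ∃ a : 𝒜, ∃ j : Fin M, j ≠ φs a ∧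
      θ (φs a) (m (φs a)) ω a ≤ θ j (m j) ω a} ≤
      ∑ a : 𝒜, ∑ j ∈ Finset.univ.erase (φs a), (Pr (E1 a j) + Pr (E2 a)) := by
    refine (measure_mono hsub).trans ?_
    refine (measure_biUnion_finset_le _ _).trans ?_
    refine Finset.sum_le_sum fun a _ => ?_
    refine (measure_biUnion_finset_le _ _).trans ?_
    exact Finset.sum_le_sum fun j _ => measure_union_le _ _
  have hne : (∑ a : 𝒜, ∑ j ∈ Finset.univ.erase (φs a), (Pr (E1 a j) + Pr (E2 a))) ≠ ⊤ := by
    refine ne_of_lt (ENNReal.sum_lt_top.mpr fun a _ => ENNReal.sum_lt_top.mpr fun j _ => ?_)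
    exact ENNReal.add_lt_top.mpr ⟨measure_lt_top _ _, measure_lt_top _ _⟩
  have step2 := ENNReal.toReal_mono hne step1
  refine step2.trans ?_
  rw [ENNReal.toReal_sum (fun a _ => ne_of_lt (ENNReal.sum_lt_top.mpr fun j _ =>
    ENNReal.add_lt_top.mpr ⟨measure_lt_top _ _, measure_lt_top _ _⟩))]
  have step3 : ∑ a : 𝒜, (∑ j ∈ Finset.univ.erase (φs a), (Pr (E1 a j) + Pr (E2 a))).toReal ≤
      ∑ a : 𝒜, ∑ j ∈ Finset.univ.erase (φs a), 2 * δt := by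
    refine Finset.sum_le_sum fun a _ => ?_
    rw [ENNReal.toReal_sum (fun j _ =>
      ne_of_lt (ENNReal.add_lt_top.mpr ⟨measure_lt_top _ _, measure_lt_top _ _⟩))]
    refine Finset.sum_le_sum fun j _ => ?_
    rw [ENNReal.toReal_add (measure_ne_top _ _) (measure_ne_top _ _)]
    have := hE1bound a j
    have := hE2bound a
    linarith
  refine step3.trans ?_
  have hcard2 : ∀ a : 𝒜, ((Finset.univ.erase (φs a)).card : ℝ) = (M : ℝ) - 1 := by
    intro a
    rw [Finset.card_erase_of_mem (Finset.mem_univ _), Finset.card_univ, Fintype.card_fin]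
    push_cast [Nat.cast_sub (by omega : 1 ≤ M)]
    ring
  have hsumconst : ∑ a : 𝒜, ∑ j ∈ Finset.univ.erase (φs a), 2 * δt =
      (Fintype.card 𝒜 : ℝ) * (((M : ℝ) - 1) * (2 * δt)) := by
    rw [Finset.sum_congr rfl (fun a _ => Finset.sum_const (2 * δt))]
    rw [Finset.sum_congr rfl (fun a _ => by rw [nsmul_eq_mul, hcard2 a])]
    rw [Finset.sum_const, Finset.card_univ, nsmul_eq_mul]
  rw [hsumconst]
  have hδtpos : 0 ≤ δt := by rw [hδt_exp]; positivity
  nlinarith [hδtpos]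
end
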